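/- arXiv:2404.10639 — 5 statements merged into one kernel-verified Lean document; each statement's English description precedes it below -/
import Mathlib

section
/- For any prime p and natural numbers n, q with n = pq or n = pq + 1, the fixed point set of the Z/p-action on the unordered configuration space C_n(ℂ) of n points in the complex plane (where the generator acts by rotation by 2π/p) is homeomorphic to the unordered configuration space C_q(ℂ*) of q points in the punctured plane. -/
/-- The ordered configuration space of `n` points in `X`. -/
def OConf (n : ℕ) (X : Type*) [TopologicalSpace X] : Type _ :=
  {f : Fin n → X // Function.Injective f}

instance (n : ℕ) (X : Type*) [TopologicalSpace X] : TopologicalSpace (OConf n X) :=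
  instTopologicalSpaceSubtype

/-- Two ordered configurations are equivalent if they differ by a permutation. -/
def confSetoid (n : ℕ) (X : Type*) [TopologicalSpace X] : Setoid (OConf n X) where
  r f g := ∃ σ : Equiv.Perm (Fin n), f.1 = g.1 ∘ σ
  iseqv := by
    constructor
    · exact fun f => ⟨Equiv.refl _, rfl⟩
    · rintro f g ⟨σ, h⟩
      refine ⟨σ.symm, ?_⟩
      funext i
      simp [h]
    · rintro f g h ⟨σ, hσ⟩ ⟨τ, hτ⟩
      exact ⟨σ.trans τ, by rw [hσ, hτ]; rfl⟩

/-- The unordered configuration space of `n` points in `X`, with the quotient topology. -/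
def UConf (n : ℕ) (X : Type*) [TopologicalSpace X] : Type _ :=
  Quotient (confSetoid n X)

instance (n : ℕ) (X : Type*) [TopologicalSpace X] : TopologicalSpace (UConf n X) :=
  instTopologicalSpaceQuotient

/-- Rotation of a configuration of points of `ℂ` by the angle `2π/p`
(the generator of the `ℤ/p`-action on `C_n(ℂ)`). -/
noncomputable def rotC (p n : ℕ) : UConf n ℂ → UConf n ℂ :=
  Quotient.map
    (fun f => ⟨fun i => Complex.exp (2 * Real.pi * Complex.I / p) * f.1 i,
      (mul_right_injective₀ (Complex.exp_ne_zero _)).comp f.2⟩)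
    (by
      rintro f g ⟨σ, h⟩
      refine ⟨σ, ?_⟩
      funext i
      simp only [Function.comp_apply]
      rw [show f.1 i = (g.1 ∘ σ) i from congrFun h i]
      rfl)

/-!
A configuration fixed by the rotation by `ζ = exp (2πi/p)` is a finite set stable under
multiplication by `ζ`. Its nonzero points split into free orbits of the `p`-th roots of unity,
each a full fibre of `z ↦ z ^ p` over a point of `ℂ*`, and the origin is the only fixed point.
Counting modulo `p ≥ 2`, a fixed configuration of `n ∈ {pq, pq + 1}` points consists of exactly
`q` orbits, together with the origin iff `n = pq + 1`. Hence taking the `p`-th powers of the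
nonzero points is a bijection onto `C_q(ℂ*)`, inverted by taking all `p`-th roots and adding the
origin when `n = pq + 1`.

Both maps are continuous because the quotient map from ordered to unordered configurations is
open: near a given configuration the first map lifts to `f ↦ (f iᵥ ^ p)ᵥ` for indices `iᵥ`
chosen at the base point, and the second to `g ↦ (ζ ^ k * bⱼ (g j))ₖⱼ` for local continuous
branches `bⱼ` of the `p`-th root.
-/

open Finset Filter Topology
open scoped Pointwise

lemma ContinuousAt.exists_subtype_lift {Y Z : Type*} [TopologicalSpace Y] [TopologicalSpace Z]
    {P : Z → Prop} {v : Y → Z} {y₀ : Y} (hv : ContinuousAt v y₀) (hP : ∀ᶠ y in 𝓝 y₀, P (v y)) :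
    ∃ r : Y → Subtype P, ContinuousAt r y₀ ∧ ∀ᶠ y in 𝓝 y₀, (r y : Z) = v y := by
  classical
  let r y : Subtype P := if h : P (v y) then ⟨v y, h⟩ else ⟨v y₀, hP.self_of_nhds⟩
  have hrv : ∀ᶠ y in 𝓝 y₀, (r y : Z) = v y := by
    filter_upwards [hP] with y hy
    simp [r, hy]
  refine ⟨r, tendsto_subtype_rng.2 ?_, hrv⟩
  rw [hrv.self_of_nhds]
  exact hv.congr' (hrv.mono fun y hy => hy.symm)

lemma isOpen_setOf_injective {ι X : Type*} [Finite ι] [TopologicalSpace X] [T2Space X] :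
    IsOpen {g : ι → X | Function.Injective g} := by
  have : {g : ι → X | Function.Injective g} = ⋂ i, ⋂ j, ⋂ (_ : i ≠ j), {g | g i ≠ g j} := by
    ext g
    simp only [Set.mem_ofPred_eq, Set.mem_iInter]
    exact ⟨fun hg i j hij h => hij (hg h), fun hg i j h => by_contra fun hij => hg i j hij h⟩
  rw [this]
  exact isOpen_iInter_of_finite fun i => isOpen_iInter_of_finite fun j =>
    isOpen_iInter_of_finite fun _ => isOpen_ne_fun (continuous_apply i) (continuous_apply j)

lemma Complex.exists_continuousAt_pow_eq {p : ℕ} (hp : p ≠ 0) {w₀ : ℂ} (hw₀ : w₀ ≠ 0) :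
    ∃ b : ℂ → ℂ, ContinuousAt b w₀ ∧ ∀ w, b w ^ p = w := by
  obtain ⟨ρ, hρ⟩ := IsAlgClosed.exists_pow_nat_eq w₀ (Nat.pos_of_ne_zero hp)
  refine ⟨fun w => ρ * (w / w₀) ^ (p⁻¹ : ℂ), ?_, fun w => ?_⟩
  · refine continuousAt_const.mul ((continuousAt_cpow_const ?_).comp
      (continuousAt_id.div_const _))
    simp [hw₀]
  · rw [mul_pow, hρ, cpow_nat_inv_pow _ hp, mul_div_cancel₀ _ hw₀]

namespace UConf

variable {m : ℕ} {X : Type*} [TopologicalSpace X]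

def mk (f : OConf m X) : UConf m X := Quotient.mk _ f

lemma mk_eq_mk_iff {f g : OConf m X} : mk f = mk g ↔ ∃ σ : Equiv.Perm (Fin m), f.1 = g.1 ∘ σ :=
  Quotient.eq

lemma isOpenQuotientMap_mk : IsOpenQuotientMap (mk : OConf m X → UConf m X) := by
  refine ⟨Quotient.mk_surjective, continuous_quot_mk, fun V hV => ?_⟩
  let permute (σ : Equiv.Perm (Fin m)) (f : OConf m X) : OConf m X :=
    ⟨f.1 ∘ σ, f.2.comp σ.injective⟩
  have hsat : mk ⁻¹' (mk '' V) = ⋃ σ, permute σ ⁻¹' V := by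
    ext f
    simp only [Set.mem_preimage, Set.mem_image, Set.mem_iUnion, mk_eq_mk_iff]
    constructor
    · rintro ⟨g, hg, σ, hσ⟩
      exact ⟨σ, (Subtype.ext hσ : g = permute σ f) ▸ hg⟩
    · rintro ⟨σ, hσ⟩
      exact ⟨_, hσ, σ, rfl⟩
  have hpermute (σ : Equiv.Perm (Fin m)) : Continuous (permute σ) :=
    Continuous.subtype_mk (continuous_pi fun i => (continuous_apply (σ i)).comp
      continuous_subtype_val : Continuous fun f : OConf m X => f.1 ∘ σ) _
  show IsOpen (mk ⁻¹' (mk '' V))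
  rw [hsat]
  exact isOpen_iUnion fun σ => hV.preimage (hpermute σ)

variable [DecidableEq X]

def toFinset : UConf m X → Finset X :=
  Quotient.lift (fun f => univ.image f.1) fun f g ⟨σ, hσ⟩ => by
    rw [hσ, ← image_image, image_univ_equiv]

@[simp]
lemma toFinset_mk (f : OConf m X) : (mk f).toFinset = univ.image f.1 := rfl

lemma card_toFinset (c : UConf m X) : c.toFinset.card = m := by
  obtain ⟨f, rfl⟩ := isOpenQuotientMap_mk.surjective c
  rw [toFinset_mk, card_image_of_injective _ f.2, card_univ, Fintype.card_fin]

lemma toFinset_injective : Function.Injective (toFinset : UConf m X → Finset X) := by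
  intro c d hcd
  obtain ⟨f, rfl⟩ := isOpenQuotientMap_mk.surjective c
  obtain ⟨g, rfl⟩ := isOpenQuotientMap_mk.surjective d
  have hrange : Set.range f.1 = Set.range g.1 := by
    simpa only [toFinset_mk, coe_image, coe_univ, Set.image_univ] using
      congrArg (fun s : Finset X => (s : Set X)) hcd
  refine mk_eq_mk_iff.2 ⟨(Equiv.ofInjective f.1 f.2).trans
    ((Equiv.setCongr hrange).trans (Equiv.ofInjective g.1 g.2).symm), funext fun i => ?_⟩
  simp [Equiv.apply_ofInjective_symm g.2]

noncomputable def ofFinset (s : Finset X) (hs : s.card = m) : UConf m X :=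
  mk ⟨Subtype.val ∘ (s.equivFinOfCardEq hs).symm,
    Subtype.val_injective.comp (s.equivFinOfCardEq hs).symm.injective⟩

@[simp]
lemma toFinset_ofFinset (s : Finset X) (hs : s.card = m) : (ofFinset s hs).toFinset = s := by
  ext x
  change x ∈ univ.image (Subtype.val ∘ (s.equivFinOfCardEq hs).symm) ↔ _
  simp only [mem_image, mem_univ, true_and, Function.comp_apply]
  exact ⟨fun ⟨i, hi⟩ => hi ▸ ((s.equivFinOfCardEq hs).symm i).2,
    fun hx => ⟨s.equivFinOfCardEq hs ⟨x, hx⟩, by simp⟩⟩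

lemma continuousAt_of_eventually_toFinset_eq {Y ι : Type*} [TopologicalSpace Y] [Fintype ι]
    (hι : Fintype.card ι = m) {φ : Y → UConf m X} {r : Y → ι → X} {y₀ : Y}
    (hr : ContinuousAt r y₀) (h : ∀ᶠ y in 𝓝 y₀, univ.image (r y) = (φ y).toFinset) :
    ContinuousAt φ y₀ := by
  classical
  let e := (Fintype.equivFinOfCardEq hι).symm
  let R y : Fin m → X := r y ∘ e
  have hR : ContinuousAt R y₀ := continuousAt_pi.2 fun i => (continuousAt_apply (e i) _).comp hr
  have himage : ∀ᶠ y in 𝓝 y₀, univ.image (R y) = (φ y).toFinset := by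
    filter_upwards [h] with y hy
    rw [← hy, ← image_image, image_univ_equiv]
  obtain ⟨L, hL, hLR⟩ := hR.exists_subtype_lift (P := Function.Injective) <| himage.mono
    fun y hy => by rw [← Set.injOn_univ, ← coe_univ, ← card_image_iff, hy, card_toFinset,
      card_univ, Fintype.card_fin]
  refine (isOpenQuotientMap_mk.continuous.continuousAt.comp (f := L) hL).congr ?_
  filter_upwards [himage, hLR] with y hy hLy
  exact toFinset_injective <| (congrArg (fun g => univ.image g) hLy).trans hy

end UConf

section PowPreimage

open Polynomial

variable {K : Type*} [Field K] [DecidableEq K] {p : ℕ} [NeZero p] {ζ : K}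

noncomputable def powPreimage (p : ℕ) (t : Finset K) : Finset K :=
  t.biUnion fun a => nthRootsFinset p a

lemma mem_powPreimage {t : Finset K} {z : K} : z ∈ powPreimage p t ↔ z ^ p ∈ t := by
  simp [powPreimage, Polynomial.mem_nthRootsFinset (NeZero.pos p)]

lemma zero_notMem_image_pow_erase_zero (s : Finset K) : (0 : K) ∉ (s.erase 0).image (· ^ p) := by
  simp only [mem_image, not_exists, not_and]
  exact fun z hz hz0 => ne_of_mem_erase hz (pow_eq_zero_iff (NeZero.ne p) |>.1 hz0)

lemma IsPrimitiveRoot.card_nthRootsFinset_of_ne_zero [IsAlgClosed K] (hζ : IsPrimitiveRoot ζ p)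
    {a : K} (ha : a ≠ 0) : (nthRootsFinset p a).card = p := by
  rw [nthRootsFinset_def, Multiset.toFinset_card_of_nodup (hζ.nthRoots_nodup ha),
    hζ.card_nthRoots, if_pos (IsAlgClosed.exists_pow_nat_eq a (NeZero.pos p))]

lemma IsPrimitiveRoot.card_powPreimage [IsAlgClosed K] (hζ : IsPrimitiveRoot ζ p)
    {t : Finset K} (ht : 0 ∉ t) : (powPreimage p t).card = p * t.card := by
  rw [powPreimage, card_biUnion, sum_congr rfl fun a ha => hζ.card_nthRootsFinset_of_ne_zero
    (ne_of_mem_of_not_mem ha ht), sum_const, smul_eq_mul, mul_comm]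
  intro a _ b _ hab
  refine disjoint_left.2 fun z hza hzb => hab ?_
  rw [Polynomial.mem_nthRootsFinset (NeZero.pos p)] at hza hzb
  rw [← hza, hzb]

lemma IsPrimitiveRoot.smul_powPreimage (hζ : IsPrimitiveRoot ζ p) (t : Finset K) :
    ζ • powPreimage p t = powPreimage p t := by
  ext z
  rw [← inv_smul_mem_iff₀ (hζ.ne_zero (NeZero.ne p)), mem_powPreimage, mem_powPreimage,
    smul_eq_mul, mul_pow, inv_pow, hζ.pow_eq_one, inv_one, one_mul]

lemma image_pow_powPreimage [IsAlgClosed K] (t : Finset K) :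
    (powPreimage p t).image (· ^ p) = t := by
  ext w
  simp only [mem_image, mem_powPreimage]
  refine ⟨fun ⟨z, hz, hzw⟩ => hzw ▸ hz, fun hw => ?_⟩
  obtain ⟨z, hz⟩ := IsAlgClosed.exists_pow_nat_eq w (NeZero.pos p)
  exact ⟨z, hz ▸ hw, hz⟩

lemma IsPrimitiveRoot.mem_of_pow_eq_pow (hζ : IsPrimitiveRoot ζ p) {s : Finset K}
    (hs : ζ • s = s) {w z : K} (hw : w ∈ s) (hw0 : w ≠ 0) (h : z ^ p = w ^ p) : z ∈ s := by
  have hpow (k : ℕ) : ζ ^ k • s = s := by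
    induction k with
    | zero => rw [pow_zero, one_smul]
    | succ k ih => rw [pow_succ, mul_smul, hs, ih]
  obtain ⟨k, -, hk⟩ := hζ.eq_pow_of_pow_eq_one (ξ := z / w) (by
    rw [div_pow, h, div_self (pow_ne_zero _ hw0)])
  rw [← div_mul_cancel₀ z hw0, ← hk, ← smul_eq_mul, ← hpow k]
  exact smul_mem_smul_finset hw

lemma IsPrimitiveRoot.powPreimage_image_pow_erase_zero (hζ : IsPrimitiveRoot ζ p)
    {s : Finset K} (hs : ζ • s = s) :
    powPreimage p ((s.erase 0).image (· ^ p)) = s.erase 0 := by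
  ext z
  rw [mem_powPreimage, mem_image]
  refine ⟨fun ⟨w, hw, hwz⟩ => mem_erase.2 ⟨?_, ?_⟩, fun hz => ⟨z, hz, rfl⟩⟩
  · rintro rfl
    rw [zero_pow (NeZero.ne p), pow_eq_zero_iff (NeZero.ne p)] at hwz
    exact ne_of_mem_erase hw hwz
  · exact hζ.mem_of_pow_eq_pow hs (mem_of_mem_erase hw) (ne_of_mem_erase hw) hwz.symm

lemma IsPrimitiveRoot.image_mul_pow_eq_powPreimage (hζ : IsPrimitiveRoot ζ p) {ι : Type*}
    [Fintype ι] {b : ι → K} (hb : ∀ i, b i ≠ 0) :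
    univ.image (fun x : Fin p × ι => ζ ^ (x.1 : ℕ) * b x.2) =
      powPreimage p (univ.image fun i => b i ^ p) := by
  ext z
  simp only [mem_image, mem_univ, true_and, mem_powPreimage, Prod.exists]
  constructor
  · rintro ⟨k, i, rfl⟩
    refine ⟨i, ?_⟩
    rw [mul_pow, ← pow_mul, mul_comm (k : ℕ), pow_mul, hζ.pow_eq_one, one_pow, one_mul]
  · rintro ⟨i, hi⟩
    obtain ⟨k, hk, hkz⟩ := hζ.eq_pow_of_pow_eq_one (ξ := z / b i)
      (by rw [div_pow, ← hi, div_self (pow_ne_zero _ (hb i))])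
    exact ⟨⟨k, hk⟩, i, by rw [hkz, div_mul_cancel₀ _ (hb i)]⟩

end PowPreimage

lemma Nat.eq_and_eq_of_mul_add_eq_mul_add {p a b e f : ℕ} (he : e < p) (hf : f < p)
    (h : p * a + e = p * b + f) : a = b ∧ e = f := by
  have hdiv {c r : ℕ} (hr : r < p) := (Nat.div_mod_unique (a := p * c + r) (d := c) (c := r)
    (by omega)).2 ⟨add_comm _ _, hr⟩
  obtain ⟨ha, he'⟩ := hdiv (c := a) he
  obtain ⟨hb, hf'⟩ := hdiv (c := b) hf
  rw [h] at ha he'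
  exact ⟨ha.symm.trans hb, he'.symm.trans hf'⟩

section Counting

variable {K : Type*} [Field K] [DecidableEq K] [IsAlgClosed K] {p : ℕ} [NeZero p] {ζ : K}

lemma IsPrimitiveRoot.card_erase_zero_of_smul_eq (hζ : IsPrimitiveRoot ζ p) {s : Finset K}
    (hs : ζ • s = s) : (s.erase 0).card = p * ((s.erase 0).image (· ^ p)).card := by
  rw [← hζ.card_powPreimage (zero_notMem_image_pow_erase_zero s),
    hζ.powPreimage_image_pow_erase_zero hs]

lemma IsPrimitiveRoot.card_image_pow_erase_zero (hζ : IsPrimitiveRoot ζ p) (hp : 1 < p)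
    {s : Finset K} (hs : ζ • s = s) {q : ℕ} (hcard : s.card = p * q ∨ s.card = p * q + 1) :
    ((s.erase 0).image (· ^ p)).card = q ∧ (0 ∈ s ↔ s.card = p * q + 1) := by
  have hB := hζ.card_erase_zero_of_smul_eq hs
  by_cases h0 : (0 : K) ∈ s
  · have hs0 : s.card = p * ((s.erase 0).image (· ^ p)).card + 1 := by
      rw [← hB, card_erase_add_one h0]
    rw [hs0] at hcard ⊢
    rcases hcard with h | h
    · exact absurd (Nat.eq_and_eq_of_mul_add_eq_mul_add hp (by omega) h).2 one_ne_zero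
    · exact ⟨(Nat.eq_and_eq_of_mul_add_eq_mul_add hp hp h).1, iff_of_true h0 h⟩
  · have hs0 : s.card = p * ((s.erase 0).image (· ^ p)).card := by
      rw [← hB, erase_eq_of_notMem h0]
    rw [hs0] at hcard ⊢
    rcases hcard with h | h
    · refine ⟨(Nat.eq_and_eq_of_mul_add_eq_mul_add (e := 0) (f := 0) (by omega) (by omega) h).1,
        iff_of_false h0 (by omega)⟩
    · exact absurd (Nat.eq_and_eq_of_mul_add_eq_mul_add (e := 0) (by omega) hp h).2 zero_ne_one

end Counting

section FixedPoints

variable {p q n : ℕ}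

lemma isPrimitiveRoot_rotation (hp : p ≠ 0) :
    IsPrimitiveRoot (Complex.exp (2 * Real.pi * Complex.I / p)) p :=
  Complex.isPrimitiveRoot_exp p hp

lemma toFinset_rotC (c : UConf n ℂ) :
    (rotC p n c).toFinset = Complex.exp (2 * Real.pi * Complex.I / p) • c.toFinset := by
  obtain ⟨f, rfl⟩ := UConf.isOpenQuotientMap_mk.surjective c
  change univ.image (fun i => _ * f.1 i) = _
  rw [UConf.toFinset_mk, smul_finset_def, image_image]
  rfl

lemma rotC_eq_self_iff {c : UConf n ℂ} :
    rotC p n c = c ↔ Complex.exp (2 * Real.pi * Complex.I / p) • c.toFinset = c.toFinset := by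
  rw [← toFinset_rotC, UConf.toFinset_injective.eq_iff]

lemma card_image_pow_erase_zero_of_rotC_eq (hp : 1 < p) (hn : n = p * q ∨ n = p * q + 1)
    {c : UConf n ℂ} (hc : rotC p n c = c) : ((c.toFinset.erase 0).image (· ^ p)).card = q :=
  have : NeZero p := ⟨by omega⟩
  ((isPrimitiveRoot_rotation (NeZero.ne p)).card_image_pow_erase_zero hp
    (rotC_eq_self_iff.1 hc) (by rwa [UConf.card_toFinset])).1

noncomputable def orbitConf (hp : 1 < p) (hn : n = p * q ∨ n = p * q + 1)
    (c : {c : UConf n ℂ // rotC p n c = c}) : UConf q {z : ℂ // z ≠ 0} :=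
  UConf.ofFinset (((c.1.toFinset.erase 0).image (· ^ p)).subtype (· ≠ 0)) <| by
    have : NeZero p := ⟨by omega⟩
    rw [card_subtype, filter_true_of_mem fun w hw => ne_of_mem_of_not_mem hw
      (zero_notMem_image_pow_erase_zero _)]
    exact card_image_pow_erase_zero_of_rotC_eq hp hn c.2

noncomputable def rootsConf (hp : 1 < p) (hn : n = p * q ∨ n = p * q + 1)
    (x : UConf q {z : ℂ // z ≠ 0}) : UConf n ℂ :=
  UConf.ofFinset (powPreimage p (x.toFinset.map (.subtype _)) ∪
      if n = p * q + 1 then {0} else ∅) <| by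
    have : NeZero p := ⟨by omega⟩
    rw [card_union_of_disjoint, (isPrimitiveRoot_rotation (NeZero.ne p)).card_powPreimage,
      card_map, UConf.card_toFinset]
    · split_ifs <;> simp <;> omega
    · simp
    · split_ifs
      · simp [mem_powPreimage, zero_pow (NeZero.ne p)]
      · exact disjoint_empty_right _

variable (hp : 1 < p) (hn : n = p * q ∨ n = p * q + 1)

lemma map_toFinset_orbitConf (c : {c : UConf n ℂ // rotC p n c = c}) :
    (orbitConf hp hn c).toFinset.map (.subtype _) = (c.1.toFinset.erase 0).image (· ^ p) := by
  have : NeZero p := ⟨by omega⟩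
  rw [orbitConf, UConf.toFinset_ofFinset, subtype_map_of_mem fun w hw =>
    ne_of_mem_of_not_mem hw (zero_notMem_image_pow_erase_zero _)]

lemma toFinset_rootsConf (x : UConf q {z : ℂ // z ≠ 0}) :
    (rootsConf hp hn x).toFinset =
      powPreimage p (x.toFinset.map (.subtype _)) ∪ if n = p * q + 1 then {0} else ∅ :=
  UConf.toFinset_ofFinset _ _

lemma rotC_rootsConf (x : UConf q {z : ℂ // z ≠ 0}) :
    rotC p n (rootsConf hp hn x) = rootsConf hp hn x := by
  have : NeZero p := ⟨by omega⟩
  rw [rotC_eq_self_iff, toFinset_rootsConf, smul_finset_union,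
    (isPrimitiveRoot_rotation (NeZero.ne p)).smul_powPreimage]
  split_ifs <;> simp

lemma rootsConf_orbitConf (c : {c : UConf n ℂ // rotC p n c = c}) :
    rootsConf hp hn (orbitConf hp hn c) = c.1 := by
  have : NeZero p := ⟨by omega⟩
  have hζ := isPrimitiveRoot_rotation (p := p) (NeZero.ne p)
  have hs := rotC_eq_self_iff.1 c.2
  have hzero := (hζ.card_image_pow_erase_zero hp hs (by rwa [UConf.card_toFinset])).2
  apply UConf.toFinset_injective
  rw [UConf.card_toFinset] at hzero
  rw [toFinset_rootsConf, map_toFinset_orbitConf,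
    hζ.powPreimage_image_pow_erase_zero hs]
  split_ifs with h
  · rw [union_comm, ← insert_eq, insert_erase (hzero.2 h)]
  · rw [union_empty, erase_eq_of_notMem (mt hzero.1 h)]

lemma orbitConf_rootsConf (x : UConf q {z : ℂ // z ≠ 0}) :
    orbitConf hp hn ⟨rootsConf hp hn x, rotC_rootsConf hp hn x⟩ = x := by
  have : NeZero p := ⟨by omega⟩
  apply UConf.toFinset_injective
  apply map_injective (.subtype _)
  have h0 : (0 : ℂ) ∉ powPreimage p (x.toFinset.map (.subtype _)) := by
    simp [mem_powPreimage, zero_pow (NeZero.ne p)]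
  rw [map_toFinset_orbitConf, toFinset_rootsConf, erase_union_distrib, erase_eq_of_notMem h0]
  split_ifs <;> simp [image_pow_powPreimage]

noncomputable def rootsTuple (p n : ℕ) (b : Fin q → ℂ → ℂ) (g : OConf q {z : ℂ // z ≠ 0}) :
    (Fin p × Fin q) ⊕ Fin (n - p * q) → ℂ :=
  Sum.elim (fun x => Complex.exp (2 * Real.pi * Complex.I / p) ^ (x.1 : ℕ) * b x.2 (g.1 x.2))
    fun _ => 0

lemma image_rootsTuple {b : Fin q → ℂ → ℂ} (hb : ∀ j w, b j w ^ p = w)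
    (g : OConf q {z : ℂ // z ≠ 0}) :
    univ.image (rootsTuple p n b g) = (rootsConf hp hn (UConf.mk g)).toFinset := by
  have : NeZero p := ⟨by omega⟩
  have hb0 (j : Fin q) : b j (g.1 j) ≠ 0 := fun h =>
    (g.1 j).2 ((hb j _).symm.trans (by rw [h, zero_pow (NeZero.ne p)]))
  have hroots : univ.image (fun x : Fin p × Fin q =>
      Complex.exp (2 * Real.pi * Complex.I / p) ^ (x.1 : ℕ) * b x.2 (g.1 x.2)) =
      powPreimage p ((UConf.mk g).toFinset.map (.subtype _)) := by
    rw [(isPrimitiveRoot_rotation (NeZero.ne p)).image_mul_pow_eq_powPreimage hb0]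
    simp only [hb, UConf.toFinset_mk, map_eq_image, image_image]
    rfl
  rw [toFinset_rootsConf, ← hroots]
  ext z
  simp only [rootsTuple, mem_image, mem_univ, true_and, Sum.exists, Sum.elim_inl, Sum.elim_inr,
    mem_union]
  refine or_congr Iff.rfl ?_
  split_ifs with h
  · rw [mem_singleton, eq_comm]
    exact ⟨fun ⟨_, hz⟩ => hz, fun hz => ⟨⟨0, by omega⟩, hz⟩⟩
  · simp only [notMem_empty, iff_false, not_exists]
    exact fun t => absurd t.2 (by omega)

lemma continuous_rootsConf : Continuous (rootsConf hp hn) := by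
  rw [← UConf.isOpenQuotientMap_mk.continuous_comp_iff, continuous_iff_continuousAt]
  intro g₀
  choose b hb hbp using fun j => Complex.exists_continuousAt_pow_eq (p := p) (by omega) (g₀.1 j).2
  refine UConf.continuousAt_of_eventually_toFinset_eq (r := rootsTuple p n b) (by simp; omega)
    (continuousAt_pi.2 ?_) (Eventually.of_forall (image_rootsTuple hp hn hbp))
  rintro (⟨k, j⟩ | t)
  · have hval : Continuous fun g : OConf q {z : ℂ // z ≠ 0} => (g.1 j : ℂ) :=
      continuous_subtype_val.comp ((continuous_apply j).comp continuous_subtype_val)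
    exact continuousAt_const.mul ((hb j).comp (f := fun g : OConf q {z : ℂ // z ≠ 0} =>
      (g.1 j : ℂ)) hval.continuousAt)
  · exact continuousAt_const

lemma continuous_orbitConf : Continuous (orbitConf hp hn) := by
  have : NeZero p := ⟨by omega⟩
  let S := {c : UConf n ℂ | rotC p n c = c}
  rw [← (UConf.isOpenQuotientMap_mk.restrictPreimage S).continuous_comp_iff,
    continuous_iff_continuousAt]
  intro y₀
  let P₀ := ((UConf.mk y₀.1).toFinset.erase 0).image (· ^ p)
  have hP₀ : Fintype.card P₀ = q := by
    rw [Fintype.card_coe]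
    exact card_image_pow_erase_zero_of_rotC_eq hp hn y₀.2
  have hroot (w : P₀) : ∃ i : Fin n, y₀.1.1 i ^ p = w := by
    obtain ⟨z, hz, hzw⟩ := mem_image.1 w.2
    obtain ⟨i, -, rfl⟩ := mem_image.1 (mem_of_mem_erase hz)
    exact ⟨i, hzw⟩
  choose i hi using hroot
  let v (f : UConf.mk ⁻¹' S) (w : P₀) : ℂ := f.1.1 (i w) ^ p
  have hval : Continuous fun f : UConf.mk ⁻¹' S => f.1.1 :=
    continuous_subtype_val.comp continuous_subtype_val
  have hv (w : P₀) : Continuous (v · w) := ((continuous_apply (i w)).comp hval).pow p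
  have hinj : ∀ᶠ f in 𝓝 y₀, Function.Injective (v f) :=
    (continuous_pi hv).continuousAt.eventually_mem <| isOpen_setOf_injective.mem_nhds
      fun w w' h => Subtype.ext (by simpa only [v, hi] using h)
  choose r hr hrv using fun w => (hv w).continuousAt.exists_subtype_lift (P := (· ≠ 0)) <|
    (hv w).continuousAt.eventually_ne <| (hi w).symm ▸
      ne_of_mem_of_not_mem w.2 (zero_notMem_image_pow_erase_zero _)
  refine UConf.continuousAt_of_eventually_toFinset_eq (r := fun f w => r w f) hP₀
    (continuousAt_pi.2 hr) ?_
  filter_upwards [hinj, eventually_all.2 hrv] with f hinj hrv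
  apply map_injective (.subtype _)
  rw [Function.comp_apply, map_toFinset_orbitConf, map_eq_image, image_image]
  simp only [Function.comp_def, Function.Embedding.subtype_apply, hrv]
  refine eq_of_subset_of_card_le (fun z hz => ?_) ?_
  · obtain ⟨w, -, rfl⟩ := mem_image.1 hz
    refine mem_image_of_mem _ (mem_erase.2 ⟨fun h => (r w f).2 ?_, mem_image_of_mem _ (mem_univ _)⟩)
    rw [hrv w]
    simp only [v, h, zero_pow (NeZero.ne p)]
  · rw [card_image_of_injective _ hinj, card_univ, hP₀]
    exact (card_image_pow_erase_zero_of_rotC_eq hp hn f.2).le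

noncomputable def fixedPointsHomeomorph :
    {c : UConf n ℂ // rotC p n c = c} ≃ₜ UConf q {z : ℂ // z ≠ 0} where
  toFun := orbitConf hp hn
  invFun x := ⟨rootsConf hp hn x, rotC_rootsConf hp hn x⟩
  left_inv c := Subtype.ext (rootsConf_orbitConf hp hn c)
  right_inv := orbitConf_rootsConf hp hn
  continuous_toFun := continuous_orbitConf hp hn
  continuous_invFun := (continuous_rootsConf hp hn).subtype_mk _

end FixedPoints

theorem statement0 (p : ℕ) (hp : p.Prime) (q n : ℕ) (hn : n = p * q ∨ n = p * q + 1) :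
    Nonempty ({c : UConf n ℂ // rotC p n c = c} ≃ₜ UConf q {z : ℂ // z ≠ 0}) :=
  ⟨fixedPointsHomeomorph hp.one_lt hn⟩
end

section
/- Let p be an odd prime and q ∈ ℕ. There is an explicit isomorphism of F_p-vector spaces H_*(C_{pq}(ℂ); F_p) ⊕ H_*(C_{q+1}(ℂ); F_p) ≅ H_*(C_{p(q+1)}(ℂ); F_p), given on basis monomials by x ↦ ι^p·x on the first summand, and on the second summand by the substitution of variables α_i ↦ α_{i+1}, β_i ↦ β_{i+1}, u ↦ α_1, ι^{2l} ↦ β_1^l, ι^{2l+1} ↦ β_1^l·u·ι^{p−2}. -/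
/-!
STATEMENT 6: For `p` an odd prime and `q ∈ ℕ` there is an explicit isomorphism of
`𝔽_p`-vector spaces `H_*(C_{pq}(ℂ); 𝔽_p) ⊕ H_*(C_{q+1}(ℂ); 𝔽_p) ≅ H_*(C_{p(q+1)}(ℂ); 𝔽_p)`
given on basis monomials by `x ↦ ι^p · x` on the first summand and on the second summand
by the substitution `α_i ↦ α_{i+1}`, `β_i ↦ β_{i+1}`, `u ↦ α_1`, `ι^{2l} ↦ β_1^l`,
`ι^{2l+1} ↦ β_1^l · u · ι^{p-2}`.  Since the homology has the monomials as a basis, we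
formalize the isomorphism as the assertion that the explicit substitution map is a
bijection from the monomials of weight `pq` plus the monomials of weight `q+1` onto the
monomials of weight `p(q+1)`.
-/

/-- A monomial in the free graded-commutative algebra
`𝔽_p[ι, β_1, β_2, …] ⊗ Λ[u, α_1, α_2, …]` (for `p` odd), where `u = [ι,ι]`,
`α_i = Qⁱ[ι,ι]` and `β_i = βQⁱ[ι,ι]` (`i ≥ 1`).  Here `a` is the exponent of `ι`,
`b j` is the exponent of `β_{j+1}`, `e` records the presence of the exterior
generator `u`, and `j ∈ s` records the presence of the exterior generator `α_{j+1}`.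
Such monomials form a basis of `H_*(⊔_n C_n(ℂ); 𝔽_p)`. -/
structure OddMon where
  a : ℕ
  b : ℕ →₀ ℕ
  e : Bool
  s : Finset ℕ

/-- The weight (number of points) of a monomial: `ι` has weight 1, `u` weight 2,
`α_i` and `β_i` weight `2pⁱ`.  A monomial lies in `H_*(C_n(ℂ); 𝔽_p)` iff its weight is `n`. -/
def OddMon.weight (p : ℕ) (m : OddMon) : ℕ :=
  m.a + (cond m.e 2 0) + m.b.sum (fun j k => k * (2 * p ^ (j + 1))) +
    ∑ j ∈ m.s, 2 * p ^ (j + 1)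

/-- The shift embedding `i ↦ i + 1` of `ℕ`. -/
def shiftEmb : ℕ ↪ ℕ := ⟨Nat.succ, Nat.succ_injective⟩

/-- The substitution map on monomials: on the first summand `x ↦ ι^p · x`; on the second
summand `α_i ↦ α_{i+1}`, `β_i ↦ β_{i+1}`, `u ↦ α_1`, `ι^{2l} ↦ β_1^l`,
`ι^{2l+1} ↦ β_1^l · u · ι^{p-2}`. -/
noncomputable def subsMap (p : ℕ) : OddMon ⊕ OddMon → OddMon
  | .inl m => ⟨m.a + p, m.b, m.e, m.s⟩
  | .inr m =>
      ⟨if m.a % 2 = 1 then p - 2 else 0,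
       Finsupp.single 0 (m.a / 2) + m.b.embDomain shiftEmb,
       decide (m.a % 2 = 1),
       (if m.e then ({0} : Finset ℕ) else ∅) ∪ m.s.map shiftEmb⟩

lemma weight_inl (p : ℕ) (m : OddMon) :
    OddMon.weight p (subsMap p (.inl m)) = OddMon.weight p m + p := by
  simp [subsMap, OddMon.weight]; ring

lemma notmem_map_shift (s : Finset ℕ) : 0 ∉ s.map shiftEmb := by
  simp [shiftEmb]

lemma weight_inr (p : ℕ) (hp : 2 ≤ p) (m : OddMon) :
    OddMon.weight p (subsMap p (.inr m)) = p * OddMon.weight p m := by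
  have hdisj : Disjoint (if m.e then ({0} : Finset ℕ) else ∅) (m.s.map shiftEmb) := by
    cases m.e <;> simp [Finset.disjoint_left, shiftEmb]
  simp only [subsMap, OddMon.weight]
  rw [Finsupp.sum_add_index' (by intro; simp) (by intros; ring),
    Finsupp.sum_single_index (by simp), Finsupp.sum_embDomain, Finset.sum_union hdisj,
    Finset.sum_map]
  have h1 : (if m.a % 2 = 1 then p - 2 else 0) + (cond (decide (m.a % 2 = 1)) 2 0)
      + m.a / 2 * (2 * p ^ (0 + 1)) = m.a * p := by
    rcases Nat.even_or_odd m.a with ⟨l, hl⟩ | ⟨l, hl⟩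
    · rw [hl]
      have h0 : (l + l) % 2 = 0 := by omega
      have h0' : (l + l) / 2 = l := by omega
      simp [h0, h0']
      ring
    · rw [hl]
      have h0 : (2 * l + 1) % 2 = 1 := by omega
      have h0' : (2 * l + 1) / 2 = l := by omega
      have hpp : p - 2 + 2 = p := by omega
      simp [h0, h0', hpp]
      ring
  have h2 : (m.b.sum fun j k => k * (2 * p ^ (shiftEmb j + 1)))
      = p * m.b.sum fun j k => k * (2 * p ^ (j + 1)) := by
    rw [Finsupp.mul_sum]; apply Finsupp.sum_congr; intro j _
    simp [shiftEmb, pow_succ]; ring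
  have h3 : (∑ j ∈ m.s, 2 * p ^ (shiftEmb j + 1)) = p * ∑ j ∈ m.s, 2 * p ^ (j + 1) := by
    rw [Finset.mul_sum]; apply Finset.sum_congr rfl; intro j _
    simp [shiftEmb, pow_succ]; ring
  have h4 : (∑ j ∈ (if m.e then ({0} : Finset ℕ) else ∅), 2 * p ^ (j + 1))
      = p * cond m.e 2 0 := by
    cases m.e <;> simp <;> ring
  rw [h2, h3, h4, mul_add, mul_add, mul_add]
  linarith [h1]

noncomputable def invMap (p : ℕ) : OddMon → OddMon ⊕ OddMon := fun m =>
  if p ≤ m.a then .inl ⟨m.a - p, m.b, m.e, m.s⟩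
  else .inr ⟨2 * m.b 0 + (cond m.e 1 0),
    Finsupp.comapDomain Nat.succ m.b (Nat.succ_injective.injOn),
    decide (0 ∈ m.s),
    (m.s.erase 0).preimage Nat.succ (Nat.succ_injective.injOn)⟩

lemma zero_notin_range_succ : (0:ℕ) ∉ Set.range Nat.succ := by simp

lemma leftInv (p : ℕ) (hp : 2 ≤ p) (x : OddMon ⊕ OddMon) : invMap p (subsMap p x) = x := by
  cases x with
  | inl m =>
    obtain ⟨a, b, e, s⟩ := m
    simp [subsMap, invMap, Nat.le_add_left]
  | inr m =>
    obtain ⟨a, b, e, s⟩ := m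
    have hlt : ¬ p ≤ (subsMap p (.inr ⟨a, b, e, s⟩)).a := by
      simp only [subsMap]; split <;> omega
    simp only [invMap, hlt, if_false]
    congr 1
    have hb0 : ((Finsupp.single 0 (a / 2) + b.embDomain shiftEmb : ℕ →₀ ℕ)) 0 = a / 2 := by
      rw [Finsupp.add_apply, Finsupp.single_apply,
        Finsupp.embDomain_notin_range _ _ _ (by simp [shiftEmb])]
      simp
    refine OddMon.mk.injEq .. ▸ ⟨?_, ?_, ?_, ?_⟩
    · simp only [subsMap, hb0]
      rcases Nat.even_or_odd a with h | h
      · have h0 : a % 2 = 0 := Nat.even_iff.mp h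
        simp [h0]; omega
      · have h0 : a % 2 = 1 := Nat.odd_iff.mp h
        simp [h0]; omega
    · ext j
      simp only [subsMap, Finsupp.comapDomain_apply, Finsupp.add_apply]
      rw [Finsupp.single_apply, if_neg (by omega)]
      have : Nat.succ j = shiftEmb j := rfl
      rw [this, Finsupp.embDomain_apply]
      simp
    · simp only [subsMap]
      cases e <;> simp [shiftEmb]
    · ext j
      simp only [subsMap, Finset.mem_preimage, Finset.mem_erase, Finset.mem_union,
        Finset.mem_map, shiftEmb, Function.Embedding.coeFn_mk]
      constructor
      · rintro ⟨hne, h | h⟩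
        · cases e <;> simp_all
        · obtain ⟨x, hx, hxe⟩ := h
          have : x = j := by omega
          rwa [this] at hx
      · intro hj
        refine ⟨by omega, Or.inr ⟨j, hj, rfl⟩⟩

lemma rightInv (p : ℕ) (hp : 2 ≤ p) (hodd : Odd p) (n : ℕ) (m : OddMon)
    (hm : m.weight p = p * n) : subsMap p (invMap p m) = m := by
  obtain ⟨a, b, e, s⟩ := m
  by_cases hle : p ≤ a
  · simp only [invMap, hle, if_true, subsMap]
    congr 1
    omega
  · -- the divisibility dichotomy
    have hB : p ∣ b.sum (fun j k => k * (2 * p ^ (j + 1))) := by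
      apply Finset.dvd_sum
      intro j _
      exact Dvd.dvd.mul_left (Dvd.dvd.mul_left (dvd_pow_self p (Nat.succ_ne_zero j)) 2) _
    have hS : p ∣ ∑ j ∈ s, 2 * p ^ (j + 1) := by
      apply Finset.dvd_sum
      intro j _
      exact Dvd.dvd.mul_left (dvd_pow_self p (Nat.succ_ne_zero j)) 2
    have hd : p ∣ a + cond e 2 0 := by
      obtain ⟨x, hx⟩ := hB
      obtain ⟨y, hy⟩ := hS
      have hw : a + cond e 2 0 + p * x + p * y = p * n := by
        rw [← hx, ← hy, ← hm]; simp [OddMon.weight]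
      have : a + cond e 2 0 = p * (n - x - y) := by
        rw [Nat.mul_sub, Nat.mul_sub]; omega
      exact ⟨_, this⟩
    have hce : cond e 2 0 ≤ 2 := by cases e <;> simp
    have hdich : (a = 0 ∧ e = false) ∨ (a = p - 2 ∧ e = true) := by
      obtain ⟨k, hk⟩ := hd
      have hk1 : k ≤ 1 := by nlinarith
      interval_cases k
      · cases e <;> simp_all
      · cases e <;> simp_all <;> omega
    simp only [invMap, hle, if_false]
    have hpar : ∀ c : Bool, (2 * b 0 + cond c 1 0) % 2 = cond c 1 0 := by
      intro c; cases c <;> simp <;> omega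
    have hdiv2 : ∀ c : Bool, (2 * b 0 + cond c 1 0) / 2 = b 0 := by
      intro c; cases c <;> simp <;> omega
    refine OddMon.mk.injEq .. ▸ ⟨?_, ?_, ?_, ?_⟩
    · simp only [subsMap, hpar]
      rcases hdich with ⟨ha, he⟩ | ⟨ha, he⟩ <;> subst he <;> simp [ha]
    · ext j
      simp only [subsMap, Finsupp.add_apply]
      cases j with
      | zero =>
        rw [Finsupp.single_apply, if_pos rfl,
          Finsupp.embDomain_notin_range _ _ _ (by simp [shiftEmb]), hdiv2]
        simp
      | succ k =>
        rw [Finsupp.single_apply, if_neg (by omega)]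
        have : k + 1 = shiftEmb k := rfl
        rw [this, Finsupp.embDomain_apply]
        simp [Finsupp.comapDomain_apply, shiftEmb]
    · simp only [subsMap, hpar]
      cases e <;> simp
    · ext j
      simp only [subsMap, Finset.mem_union, Finset.mem_map, Finset.mem_preimage,
        Finset.mem_erase, shiftEmb, Function.Embedding.coeFn_mk]
      cases j with
      | zero =>
        constructor
        · rintro (h | ⟨x, ⟨hx0, hxs⟩, hxe⟩)
          · by_cases h0 : (0:ℕ) ∈ s
            · exact h0
            · simp [h0] at h
          · omega
        · intro h0
          left
          simp [h0]
      | succ k =>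
        constructor
        · rintro (h | ⟨x, ⟨hx0, hxs⟩, hxe⟩)
          · by_cases h0 : (0:ℕ) ∈ s <;> simp [h0] at h
          · have hxk : x = k := by omega
            rw [hxk] at hxs
            exact hxs
        · intro hk
          exact Or.inr ⟨k, ⟨by omega, hk⟩, rfl⟩

theorem statement6 (p : ℕ) (hp : p.Prime) (hodd : Odd p) (q : ℕ) :
    Set.BijOn (subsMap p)
      {x : OddMon ⊕ OddMon |
        Sum.elim (fun m => OddMon.weight p m = p * q)
          (fun m => OddMon.weight p m = q + 1) x}
      {m : OddMon | OddMon.weight p m = p * (q + 1)} := by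
  have hp2 : 2 ≤ p := hp.two_le
  refine Set.InvOn.bijOn (f' := invMap p) ⟨fun x _ => leftInv p hp2 x,
    fun m hm => rightInv p hp2 hodd (q + 1) m hm⟩ ?_ ?_
  · rintro (m | m) hx
    · simp only [Set.mem_setOf_eq, Sum.elim_inl] at hx
      simp only [Set.mem_setOf_eq, weight_inl, hx, Nat.mul_succ]
    · simp only [Set.mem_setOf_eq, Sum.elim_inr] at hx
      simp only [Set.mem_setOf_eq, weight_inr p hp2, hx]
  · intro m hm
    simp only [Set.mem_setOf_eq] at hm
    have hsub := rightInv p hp2 hodd (q + 1) m hm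
    rcases hinv : invMap p m with m' | m'
    · simp only [Set.mem_setOf_eq, Sum.elim_inl]
      have h1 := weight_inl p m'
      rw [hinv] at hsub
      rw [hsub, hm] at h1
      have : p * (q + 1) = p * q + p := by ring
      omega
    · simp only [Set.mem_setOf_eq, Sum.elim_inr]
      have h1 := weight_inr p hp2 m'
      rw [hinv] at hsub
      rw [hsub, hm] at h1
      exact (Nat.eq_of_mul_eq_mul_left (by omega) h1).symm
end

section
/- Let x ∈ H_*(C(ℂ); F_p) (p odd) be a monomial containing only the letters Qⁱ[ι,ι] and βQⁱ[ι,ι] for i ≥ 1. Then [[ι,ι], x] = 0. -/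
/-!
STATEMENT 9: Let `x ∈ H_*(C(ℂ); 𝔽_p)` (`p` odd) be a monomial containing only the
letters `Qⁱ[ι,ι]` and `βQⁱ[ι,ι]` for `i ≥ 1`.  Then `[[ι,ι], x] = 0`, where `[-,-]`
is the Browder bracket.  The ambient algebra is axiomatized by `E2H` below.
-/
/-- An abstract model of the mod `p` homology of the free `E₂`-algebra on a point,
`H_*(⊔_n C_n(ℂ); 𝔽_p)`: a bigraded (homological degree, weight = number of points)
`𝔽_p`-vector space with Pontryagin product `mul`, Browder bracket `br`, BV-operator
`Δ`, first Dyer–Lashof operation `Q` and Bockstein `bok`, satisfying the standard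
identities of F. Cohen (signs are written via the scalar `(-1 : ZMod p)`).
`hdeg d n x` means "`x` is homogeneous of homological degree `d` and weight `n`",
i.e. `x ∈ H_d(C_n(ℂ); 𝔽_p)`. -/
structure E2H (p : ℕ) where
  A : Type
  [acg : AddCommGroup A]
  [mod : Module (ZMod p) A]
  mul : A →ₗ[ZMod p] A →ₗ[ZMod p] A
  br : A →ₗ[ZMod p] A →ₗ[ZMod p] A
  Δ : A →ₗ[ZMod p] A
  Q : A → A
  bok : A → A
  one : A
  ι : A
  hdeg : ℕ → ℕ → A → Prop
  /-- homogeneity of the unit (the class of the empty configuration) -/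
  hone : hdeg 0 0 one
  /-- `ι` is the class of a point: degree 0, weight 1 -/
  hι : hdeg 0 1 ι
  hmul : ∀ {dx nx dy ny x y}, hdeg dx nx x → hdeg dy ny y → hdeg (dx + dy) (nx + ny) (mul x y)
  hbr : ∀ {dx nx dy ny x y}, hdeg dx nx x → hdeg dy ny y → hdeg (dx + dy + 1) (nx + ny) (br x y)
  hQ : ∀ {d n x}, hdeg d n x → hdeg (p * d + p - 1) (p * n) (Q x)
  hbok : ∀ {d n x}, hdeg d n x → hdeg (d - 1) n (bok x)
  /-- the product is unital and graded commutative -/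
  mul_one : ∀ x, mul x one = x
  one_mul : ∀ x, mul one x = x
  mul_comm : ∀ {dx nx dy ny} (x y : A), hdeg dx nx x → hdeg dy ny y →
    mul x y = ((-1 : ZMod p)) ^ (dx * dy) • mul y x
  /-- graded antisymmetry of the Browder bracket -/
  br_anti : ∀ {dx nx dy ny} (x y : A), hdeg dx nx x → hdeg dy ny y →
    br x y = ((-1 : ZMod p)) ^ (dx * dy + dx + dy) • br y x
  /-- the graded Jacobi relation -/
  jacobi : ∀ {dx nx dy ny} (x y z : A), hdeg dx nx x → hdeg dy ny y →
    br x (br y z) = br (br x y) z - ((-1 : ZMod p)) ^ (dy + dx + dx * dy) • br y (br x z)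
  /-- the bracket is a graded derivation -/
  br_der : ∀ {dx nx dy ny} (x y z : A), hdeg dx nx x → hdeg dy ny y →
    br x (mul y z) = mul (br x y) z + ((-1 : ZMod p)) ^ (dy + dy * dx) • mul y (br x z)
  /-- the BV relation for `Δ` -/
  Δ_mul : ∀ {dx nx} (x y : A), hdeg dx nx x →
    Δ (mul x y) = mul (Δ x) y + ((-1 : ZMod p)) ^ dx • mul x (Δ y)
      + ((-1 : ZMod p)) ^ dx • br x y
  /-- `Δ` is a derivation with respect to the bracket -/
  Δ_br : ∀ {dx nx} (x y : A), hdeg dx nx x →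
    Δ (br x y) = br (Δ x) y + ((-1 : ZMod p)) ^ (dx + 1) • br x (Δ y)
  /-- the mixed relation `[x, Qy] = ad^p(y)(x)` -/
  br_Q : ∀ x y : A, br x (Q y) = ((fun a => br a y)^[p]) x
  /-- the mixed relation `[x, βQy] = [x, ad^{p-1}(y)(βy)]` -/
  br_bokQ : ∀ x y : A, br x (bok (Q y)) = br x (((fun a => br a y)^[p - 1]) (bok y))
  /-- `Δ` vanishes on `H_*(C_n(ℂ))` for `n ≡ 0, 1 (mod p)`
  (Theorem 4.7 of the paper, via the collapse of the Serre spectral sequence) -/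
  Δ_weight : ∀ {d n x}, hdeg d n x → (n % p = 0 ∨ n % p = 1) → Δ x = 0
  /-- `ι` is the top class of `H_*(C_1(ℂ))`, so `Δι = 0` -/
  Δ_ι : Δ ι = 0

attribute [instance] E2H.acg E2H.mod

namespace E2H

variable {p : ℕ} (S : E2H p)

/-- Iterated Pontryagin product `x^k`. -/
def pow (x : S.A) : ℕ → S.A
  | 0 => S.one
  | k + 1 => S.mul x (pow x k)

/-- The letters `α_i = Qⁱ[ι,ι]` and `β_i = βQⁱ[ι,ι]`, `i ≥ 1`. -/
inductive IsABLetter : S.A → Prop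
  | alpha (i : ℕ) (hi : 1 ≤ i) : IsABLetter ((S.Q)^[i] (S.br S.ι S.ι))
  | beta (i : ℕ) (hi : 1 ≤ i) : IsABLetter (S.bok ((S.Q)^[i] (S.br S.ι S.ι)))

/-- Monomials containing only the letters `{Qⁱ[ι,ι], βQⁱ[ι,ι]}_{i ≥ 1}`. -/
inductive IsABMon : S.A → Prop
  | one : IsABMon S.one
  | mul {x y : S.A} : IsABLetter S x → IsABMon y → IsABMon (S.mul x y)

end E2H


private lemma aux_iterQ {p : ℕ} (S : E2H p) :
    ∀ i : ℕ, ∃ d n, S.hdeg d n ((S.Q)^[i] (S.br S.ι S.ι)) ∧ (0 < i → n % p = 0) := by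
  intro i
  induction i with
  | zero => exact ⟨0 + 0 + 1, 1 + 1, S.hbr S.hι S.hι, by simp⟩
  | succ j ih =>
    obtain ⟨d, n, hd, _⟩ := ih
    refine ⟨p * d + p - 1, p * n, ?_, fun _ => Nat.mul_mod_right p n⟩
    rw [Function.iterate_succ_apply']
    exact S.hQ hd

private lemma aux_letter {p : ℕ} (S : E2H p) {x : S.A} (hx : S.IsABLetter x) :
    ∃ d n, S.hdeg d n x ∧ n % p = 0 := by
  cases hx with
  | alpha i hi =>
    obtain ⟨d, n, hd, h⟩ := aux_iterQ S i
    exact ⟨d, n, hd, h hi⟩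
  | beta i hi =>
    obtain ⟨d, n, hd, h⟩ := aux_iterQ S i
    exact ⟨d - 1, n, S.hbok hd, h hi⟩

private lemma aux_mon {p : ℕ} (S : E2H p) {x : S.A} (hx : S.IsABMon x) :
    ∃ d n, S.hdeg d n x ∧ n % p = 0 := by
  induction hx with
  | one => exact ⟨0, 0, S.hone, by simp⟩
  | mul hl _ ih =>
    obtain ⟨d1, n1, h1, hn1⟩ := aux_letter S hl
    obtain ⟨d2, n2, h2, hn2⟩ := ih
    refine ⟨_, _, S.hmul h1 h2, ?_⟩
    rw [Nat.add_mod, hn1, hn2]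
    simp

theorem statement9 (p : ℕ) (hp : p.Prime) (hodd : Odd p) (S : E2H p) (x : S.A)
    (hx : S.IsABMon x) :
    S.br (S.br S.ι S.ι) x = 0 := by
  obtain ⟨d, n, hdx, hnp⟩ := aux_mon S hx
  have hΔx : S.Δ x = 0 := S.Δ_weight hdx (Or.inl hnp)
  have hΔxι : S.Δ (S.mul x S.ι) = 0 := by
    refine S.Δ_weight (S.hmul hdx S.hι) (Or.inr ?_)
    have h1 : 1 % p = 1 := Nat.mod_eq_of_lt hp.one_lt
    rw [Nat.add_mod, hnp, h1, Nat.zero_add, h1]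
  have h3 := S.Δ_mul x S.ι hdx
  rw [hΔxι, hΔx, S.Δ_ι] at h3
  simp only [map_zero, LinearMap.zero_apply, zero_add, smul_zero] at h3
  have hbrxι : S.br x S.ι = 0 := by
    have h4 := congrArg (fun z => ((-1 : ZMod p)) ^ d • z) h3
    simpa [smul_smul, ← mul_pow] using h4.symm
  have hJ := S.jacobi x S.ι S.ι hdx S.hι
  rw [hbrxι] at hJ
  simp only [map_zero, LinearMap.zero_apply, smul_zero, zero_sub, neg_zero] at hJ
  have hA := S.br_anti (S.br S.ι S.ι) x (S.hbr S.hι S.hι) hdx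
  rw [hA, hJ, smul_zero]
end

section
/- For an odd prime p and n ≢ 0, 1 (mod p), the image of the BV-operator Δ: H_*(C_n(ℂ); F_p) → H_{*+1}(C_n(ℂ); F_p) is exactly the span of the basis monomials divisible by [ι,ι]; consequently coker(Δ) has a basis given by the monomials not containing [ι,ι]. -/
/-- The monomial basis of `H_*(C_n(ℂ); 𝔽_p)`: monomials of weight `n`. -/
def Mn (p n : ℕ) : Type := {m : OddMon // m.weight p = n}

/-- `H_*(C_n(ℂ); 𝔽_p)` as the vector space with basis the weight-`n` monomials. -/
def Hn (p n : ℕ) : Type := Mn p n →₀ ZMod p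

noncomputable instance (p n : ℕ) : AddCommGroup (Hn p n) := Finsupp.instAddCommGroup
noncomputable instance (p n : ℕ) : Module (ZMod p) (Hn p n) := Finsupp.module _ _

/-- The value of the BV-operator `Δ` on a basis monomial:
`Δ(ι^a x) = a(a-1) ι^{a-2} u x` if `u` does not occur, and `Δ = 0` on monomials
containing `u`. -/
noncomputable def deltaMon (p n : ℕ) (m : Mn p n) : Hn p n :=
  if h : m.1.e = false ∧ 2 ≤ m.1.a then
    Finsupp.single
      ⟨⟨m.1.a - 2, m.1.b, true, m.1.s⟩, by
        have hw := m.2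
        simp only [OddMon.weight, h.1, cond_false, cond_true] at hw ⊢
        omega⟩
      ((m.1.a * (m.1.a - 1) : ℕ) : ZMod p)
  else 0

/-- The BV-operator `Δ` on `H_*(C_n(ℂ); 𝔽_p)`, extended linearly from its values on
the monomial basis. -/
noncomputable def deltaOp (p n : ℕ) : Hn p n →ₗ[ZMod p] Hn p n :=
  Finsupp.linearCombination (ZMod p) (deltaMon p n)

/-
`Δ` maps into the span of the `u`-monomials, and every `u`-monomial `ι^a u x` is hit up to a
unit: `Δ(ι^{a+2} x) = (a+2)(a+1) ι^a u x`, and `a + 2 ≡ n (mod p)` by the weight count, so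
the coefficient is `n(n-1) ≠ 0` in `𝔽_p`. The image is therefore spanned by a subset of the
monomial basis, and the complementary monomials give a basis of the cokernel.
-/

namespace Finsupp

variable {α R : Type*} [Ring R]

theorem ker_lsubtypeDomain (s : Set α) :
    LinearMap.ker (lsubtypeDomain s : (α →₀ R) →ₗ[R] s →₀ R) = supported R R sᶜ := by
  ext f
  simp [mem_supported', Finsupp.ext_iff, lsubtypeDomain_apply]

theorem lsubtypeDomain_surjective (s : Set α) :
    Function.Surjective (lsubtypeDomain s : (α →₀ R) →ₗ[R] s →₀ R) := by
  classical
  exact fun g => ⟨g.extendDomain, subtypeDomain_extendDomain g⟩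

theorem subtypeDomain_single_val {s : Set α} (i : s) (b : R) :
    subtypeDomain (· ∈ s) (single (i : α) b) = single i b := by
  ext j
  exact single_apply_left Subtype.val_injective i j b

noncomputable def quotientSupportedComplBasis (s : Set α) :
    Module.Basis s R ((α →₀ R) ⧸ supported R R sᶜ) :=
  Finsupp.basisSingleOne.map
    ((Submodule.quotEquivOfEq _ _ (ker_lsubtypeDomain s).symm).trans
      (LinearMap.quotKerEquivOfSurjective _ (lsubtypeDomain_surjective s))).symm

theorem quotientSupportedComplBasis_apply (s : Set α) (i : s) :
    quotientSupportedComplBasis s i = Submodule.Quotient.mk (single (i : α) (1 : R)) := by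
  rw [quotientSupportedComplBasis, Module.Basis.map_apply, coe_basisSingleOne,
    LinearEquiv.symm_apply_eq, LinearEquiv.trans_apply, Submodule.quotEquivOfEq_mk,
    LinearMap.quotKerEquivOfSurjective_apply_mk, lsubtypeDomain_apply, subtypeDomain_single_val]

theorem span_range_eq_supported {K ι : Type*} [DivisionRing K] (f : ι → α →₀ K)
    (s : Set α) (hf : ∀ i, f i ∈ supported K K s)
    (hs : ∀ a ∈ s, ∃ i, ∃ c ≠ 0, f i = single a c) :
    Submodule.span K (Set.range f) = supported K K s := by
  refine le_antisymm (Submodule.span_le.2 (Set.range_subset_iff.2 hf)) ?_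
  rw [supported_eq_span_single]
  refine Submodule.span_le.2 ?_
  rintro _ ⟨a, ha, rfl⟩
  obtain ⟨i, c, hc, hi⟩ := hs a ha
  have hsingle : single a 1 = c⁻¹ • f i := by
    rw [hi, smul_single, smul_eq_mul, inv_mul_cancel₀ hc]
  simp only [SetLike.mem_coe, hsingle]
  exact Submodule.smul_mem _ _ (Submodule.subset_span ⟨i, rfl⟩)

end Finsupp

theorem OddMon.natCast_weight (p : ℕ) (m : OddMon) :
    (m.weight p : ZMod p) = m.a + cond m.e 2 0 := by
  rcases m with ⟨a, b, _ | _, s⟩ <;> simp [OddMon.weight, Finsupp.sum, pow_succ]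

def Mn.replaceUByIotaSq {p n : ℕ} (t : Mn p n) (ht : t.1.e = true) : Mn p n :=
  ⟨⟨t.1.a + 2, t.1.b, false, t.1.s⟩, by
    have hw := t.2
    simp only [OddMon.weight, ht, cond_true, cond_false] at hw ⊢
    omega⟩

theorem deltaMon_replaceUByIotaSq {p n : ℕ} (t : Mn p n) (ht : t.1.e = true) :
    deltaMon p n (t.replaceUByIotaSq ht) = Finsupp.single t ((n : ZMod p) * (n - 1)) := by
  rcases t with ⟨⟨a, b, _ | _, s⟩, hw⟩
  · cases ht
  · have hn : ((OddMon.weight p ⟨a, b, true, s⟩ : ℕ) : ZMod p) = n := congrArg _ hw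
    rw [OddMon.natCast_weight, cond_true] at hn
    rw [← hn]
    simp only [deltaMon, Mn.replaceUByIotaSq, Nat.le_add_left, and_self, ↓reduceDIte,
      Nat.add_sub_cancel, Nat.add_one_sub_one]
    congr 1
    push_cast
    ring

theorem deltaMon_mem_supported {p n : ℕ} (m : Mn p n) :
    deltaMon p n m ∈ Finsupp.supported (ZMod p) (ZMod p) {t : Mn p n | t.1.e = true} := by
  -- `erw`: `deltaMon` takes values in `Hn p n`, which is only semireducibly `Mn p n →₀ ZMod p`.
  by_cases h : m.1.e = false ∧ 2 ≤ m.1.a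
  · erw [deltaMon, dif_pos h]
    exact Finsupp.single_mem_supported (ZMod p) _ rfl
  · erw [deltaMon, dif_neg h]
    exact zero_mem _

theorem ZMod.natCast_mul_sub_one_ne_zero {p n : ℕ} [Fact p.Prime] (h0 : n % p ≠ 0)
    (h1 : n % p ≠ 1) :
    (n : ZMod p) * (n - 1) ≠ 0 := by
  have hp1 : 1 % p = 1 := Nat.mod_eq_of_lt (Fact.out : p.Prime).one_lt
  refine mul_ne_zero ?_ (sub_ne_zero.2 ?_)
  · rwa [Ne, ZMod.natCast_eq_zero_iff, Nat.dvd_iff_mod_eq_zero]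
  · rwa [Ne, ← Nat.cast_one, ZMod.natCast_eq_natCast_iff', hp1]

theorem range_deltaOp {p n : ℕ} [Fact p.Prime] (h0 : n % p ≠ 0) (h1 : n % p ≠ 1) :
    LinearMap.range (deltaOp p n) =
      Finsupp.supported (ZMod p) (ZMod p) {t : Mn p n | t.1.e = true} :=
  (Finsupp.range_linearCombination _).trans <|
    Finsupp.span_range_eq_supported _ _ deltaMon_mem_supported fun t ht =>
      ⟨t.replaceUByIotaSq ht, _, ZMod.natCast_mul_sub_one_ne_zero h0 h1,
        deltaMon_replaceUByIotaSq t ht⟩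

theorem statement11_general (p : ℕ) (hp : p.Prime) (n : ℕ)
    (h0 : n % p ≠ 0) (h1 : n % p ≠ 1) :
    LinearMap.range (deltaOp p n) =
      Submodule.span (ZMod p)
        {v : Hn p n | ∃ m : Mn p n, m.1.e = true ∧ v = Finsupp.single m 1} ∧
    ∃ B : Module.Basis {m : Mn p n // m.1.e = false} (ZMod p)
        (Hn p n ⧸ LinearMap.range (deltaOp p n)),
      ∀ m, B m = Submodule.Quotient.mk (Finsupp.single m.1 1) := by
  have : Fact p.Prime := ⟨hp⟩
  rw [range_deltaOp h0 h1]
  refine ⟨?_, ?_⟩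
  · rw [Finsupp.supported_eq_span_single]
    congr 1
    ext v
    constructor <;> rintro ⟨m, hm, rfl⟩ <;> exact ⟨m, hm, rfl⟩
  · have hcompl : {m : Mn p n | m.1.e = true} = {m | m.1.e = false}ᶜ := by
      ext m
      simp
    rw [hcompl]
    exact ⟨Finsupp.quotientSupportedComplBasis _, Finsupp.quotientSupportedComplBasis_apply _⟩

theorem statement11 (p : ℕ) (hp : p.Prime) (hodd : Odd p) (n : ℕ)
    (h0 : n % p ≠ 0) (h1 : n % p ≠ 1) :
    LinearMap.range (deltaOp p n) =
      Submodule.span (ZMod p)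
        {v : Hn p n | ∃ m : Mn p n, m.1.e = true ∧ v = Finsupp.single m 1} ∧
    ∃ B : Module.Basis {m : Mn p n // m.1.e = false} (ZMod p)
        (Hn p n ⧸ LinearMap.range (deltaOp p n)),
      ∀ m, B m = Submodule.Quotient.mk (Finsupp.single m.1 1) :=
  statement11_general p hp n h0 h1
end

section
/- The center of the braid group B_n (n ≥ 3) is the infinite cyclic group generated by δ², where δ = σ_1(σ_2σ_1)(σ_3σ_2σ_1)⋯(σ_{n−1}⋯σ_1) in terms of the standard Artin generators σ_i. -/
/-!
Garside's argument. Let `P` be the monoid presented by the positive braid relations. Garside's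
head lemma (if `a U = b V` in `P` for generators `a`, `b`, then `U` and `V` factor through the
least common multiple of `a` and `b`) makes `P` left cancellative. Conjugation by the word `Δ`
reverses the generators, so `Δ²` is central and every generator divides `Δ²`; inverting the powers
of `Δ²` (a trivially satisfied Ore condition) turns the generators into units, so `P` embeds in
`B_n` and every braid is `x Δ^{2k}` with `x` positive.

A positive `x` with `σᵢ x = x σ_{f(i)}` for all `i` is left divisible by one generator, hence (by
the head lemma applied to adjacent generators) by all of them, hence by their least common
multiple `Δ`, and the quotient again satisfies such a relation; by induction on length `x = Δ^s`.
As `σ_1 Δ = Δ σ_{n-1}`, `Δ` is not central, so a central braid is an even power of `Δ`. Finally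
`Δ²` has infinite order because the relations preserve word length.
-/

/-- The braid relations on `n` strands, as words in the free group on the `n-1`
Artin generators: `σᵢσⱼ = σⱼσᵢ` for `|i - j| ≥ 2` and `σᵢσᵢ₊₁σᵢ = σᵢ₊₁σᵢσᵢ₊₁`. -/
def braidRels (n : ℕ) : Set (FreeGroup (Fin (n - 1))) :=
  {r | ∃ i j : Fin (n - 1), (j : ℕ) + 2 ≤ (i : ℕ) ∧
      r = FreeGroup.of i * FreeGroup.of j * (FreeGroup.of i)⁻¹ * (FreeGroup.of j)⁻¹} ∪
  {r | ∃ i j : Fin (n - 1), (j : ℕ) = (i : ℕ) + 1 ∧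
      r = FreeGroup.of i * FreeGroup.of j * FreeGroup.of i *
        (FreeGroup.of j * FreeGroup.of i * FreeGroup.of j)⁻¹}

/-- The braid group on `n` strands, presented by the Artin generators and relations. -/
abbrev BraidGroup (n : ℕ) : Type := PresentedGroup (braidRels n)

/-- The Artin generator `σᵢ` (0-indexed). -/
def braidGen (n : ℕ) (i : Fin (n - 1)) : BraidGroup n := PresentedGroup.of i

/-- `σᵢ` for a natural number index (equal to `1` when out of range). -/
def braidGen' (n : ℕ) (i : ℕ) : BraidGroup n :=
  if h : i < n - 1 then braidGen n ⟨i, h⟩ else 1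

/-- The braid `δ = σ_1(σ_2σ_1)(σ_3σ_2σ_1)⋯(σ_{n-1}σ_{n-2}⋯σ_1)` (with 0-indexed
generators: the `a`-th block is `σ_a σ_{a-1} ⋯ σ_0`). -/
def braidDelta (n : ℕ) : BraidGroup n :=
  ((List.range (n - 1)).map
    (fun a => (((List.range (a + 1)).reverse).map (braidGen' n)).prod)).prod

namespace BraidWord

variable {m : ℕ}

def Far (a b : Fin m) : Prop := (a : ℕ) + 2 ≤ b ∨ (b : ℕ) + 2 ≤ a

def Adj (a b : Fin m) : Prop := (b : ℕ) = a + 1 ∨ (a : ℕ) = b + 1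

theorem Far.symm {a b : Fin m} (h : Far a b) : Far b a := Or.symm h

theorem Adj.symm {a b : Fin m} (h : Adj a b) : Adj b a := Or.symm h

theorem Far.ne {a b : Fin m} (h : Far a b) : a ≠ b := by
  rintro rfl; unfold Far at h; omega

theorem Adj.ne {a b : Fin m} (h : Adj a b) : a ≠ b := by
  rintro rfl; unfold Adj at h; omega

theorem Far.not_adj {a b : Fin m} (h : Far a b) : ¬ Adj a b := by
  unfold Far at h; unfold Adj; omega

theorem eq_or_far_or_adj (a b : Fin m) : a = b ∨ Far a b ∨ Adj a b := by
  rcases eq_or_ne a b with h | h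
  · exact Or.inl h
  · have : (a : ℕ) ≠ b := Fin.val_ne_of_ne h
    unfold Far Adj
    omega

inductive Step : List (Fin m) → List (Fin m) → Prop
  | swap (x y : List (Fin m)) {a b : Fin m} : Far a b → Step (x ++ a :: b :: y) (x ++ b :: a :: y)
  | braid (x y : List (Fin m)) {a b : Fin m} :
      Adj a b → Step (x ++ a :: b :: a :: y) (x ++ b :: a :: b :: y)

def Eqv : List (Fin m) → List (Fin m) → Prop := Relation.ReflTransGen Step

infix:50 " ≈ₚ " => Eqv

theorem Step.symm {u v : List (Fin m)} : Step u v → Step v u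
  | swap x y h => swap x y h.symm
  | braid x y h => braid x y h.symm

theorem Step.length_eq {u v : List (Fin m)} (h : Step u v) : u.length = v.length := by
  cases h <;> simp

theorem Step.two_le_length {u v : List (Fin m)} (h : Step u v) : 2 ≤ u.length := by
  cases h <;> simp <;> omega

theorem Step.append_left (w : List (Fin m)) {u v : List (Fin m)} (h : Step u v) :
    Step (w ++ u) (w ++ v) := by
  cases h with
  | swap x y h => simpa using swap (w ++ x) y h
  | braid x y h => simpa using braid (w ++ x) y h

theorem Step.append_right (w : List (Fin m)) {u v : List (Fin m)} (h : Step u v) :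
    Step (u ++ w) (v ++ w) := by
  cases h with
  | swap x y h => simpa using swap x (y ++ w) h
  | braid x y h => simpa using braid x (y ++ w) h

theorem Step.cons_cases {a c : Fin m} {U U' : List (Fin m)} (h : Step (a :: U) (c :: U')) :
    (c = a ∧ Step U U') ∨ (∃ W, Far a c ∧ U = c :: W ∧ U' = a :: W) ∨
      (∃ W, Adj a c ∧ U = c :: a :: W ∧ U' = a :: c :: W) := by
  generalize hu : a :: U = u at h
  generalize hv : c :: U' = v at h
  cases h with
  | swap x y hab =>
    rcases x with _ | ⟨d, x⟩
    · simp only [List.nil_append, List.cons.injEq] at hu hv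
      obtain ⟨rfl, rfl⟩ := hu; obtain ⟨rfl, rfl⟩ := hv
      exact Or.inr (Or.inl ⟨y, hab, rfl, rfl⟩)
    · simp only [List.cons_append, List.cons.injEq] at hu hv
      obtain ⟨rfl, rfl⟩ := hu; obtain ⟨rfl, rfl⟩ := hv
      exact Or.inl ⟨rfl, swap x y hab⟩
  | braid x y hab =>
    rcases x with _ | ⟨d, x⟩
    · simp only [List.nil_append, List.cons.injEq] at hu hv
      obtain ⟨rfl, rfl⟩ := hu; obtain ⟨rfl, rfl⟩ := hv
      exact Or.inr (Or.inr ⟨y, hab, rfl, rfl⟩)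
    · simp only [List.cons_append, List.cons.injEq] at hu hv
      obtain ⟨rfl, rfl⟩ := hu; obtain ⟨rfl, rfl⟩ := hv
      exact Or.inl ⟨rfl, braid x y hab⟩

namespace Eqv

@[refl]
theorem refl (u : List (Fin m)) : u ≈ₚ u := Relation.ReflTransGen.refl

theorem trans {u v w : List (Fin m)} (h : u ≈ₚ v) (h' : v ≈ₚ w) : u ≈ₚ w :=
  Relation.ReflTransGen.trans h h'

instance : Trans (@Eqv m) Eqv Eqv := ⟨trans⟩

theorem symm {u v : List (Fin m)} (h : u ≈ₚ v) : v ≈ₚ u := by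
  induction h with
  | refl => rfl
  | tail _ hs ih => exact (Relation.ReflTransGen.single hs.symm).trans ih

theorem length_eq {u v : List (Fin m)} (h : u ≈ₚ v) : u.length = v.length := by
  induction h with
  | refl => rfl
  | tail _ hs ih => exact ih.trans hs.length_eq

theorem append_left (w : List (Fin m)) {u v : List (Fin m)} (h : u ≈ₚ v) : w ++ u ≈ₚ w ++ v :=
  Relation.ReflTransGen.lift (w ++ ·) (fun _ _ => Step.append_left w) _ _ h

theorem append_right (w : List (Fin m)) {u v : List (Fin m)} (h : u ≈ₚ v) : u ++ w ≈ₚ v ++ w :=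
  Relation.ReflTransGen.lift (· ++ w) (fun _ _ => Step.append_right w) _ _ h

theorem append {u v u' v' : List (Fin m)} (h : u ≈ₚ u') (h' : v ≈ₚ v') : u ++ v ≈ₚ u' ++ v' :=
  (h.append_right v).trans (h'.append_left u')

theorem cons (c : Fin m) {u v : List (Fin m)} (h : u ≈ₚ v) : c :: u ≈ₚ c :: v :=
  h.append_left [c]

theorem swap {a b : Fin m} (h : Far a b) (t : List (Fin m)) : a :: b :: t ≈ₚ b :: a :: t :=
  .single (Step.swap [] t h)

theorem braid {a b : Fin m} (h : Adj a b) (t : List (Fin m)) :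
    a :: b :: a :: t ≈ₚ b :: a :: b :: t :=
  .single (Step.braid [] t h)

theorem eq_of_singleton {a : Fin m} {u : List (Fin m)} (h : [a] ≈ₚ u) : u = [a] := by
  rcases Relation.ReflTransGen.cases_head h with rfl | ⟨v, hs, -⟩
  · rfl
  · exact absurd hs.two_le_length (by simp)

end Eqv

/-- The conclusion of Garside's head lemma for `a :: U ≈ₚ b :: V`: this common multiple of `a`
and `b` is a multiple of their least common multiple `a`, `ab = ba` or `aba = bab`. -/
structure LcmFactors (a b : Fin m) (U V : List (Fin m)) : Prop where
  eq : a = b → U ≈ₚ V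
  far : Far a b → ∃ t, U ≈ₚ b :: t ∧ V ≈ₚ a :: t
  adj : Adj a b → ∃ t, U ≈ₚ b :: a :: t ∧ V ≈ₚ a :: b :: t

def HeadLemmaBelow (m N : ℕ) : Prop :=
  ∀ (U : List (Fin m)) (a b : Fin m) (V : List (Fin m)),
    U.length ≤ N → a :: U ≈ₚ b :: V → LcmFactors a b U V

namespace LcmFactors

variable {N : ℕ} {a b c : Fin m} {U V W t : List (Fin m)}

theorem of_eq (h : U ≈ₚ V) : LcmFactors a a U V :=
  ⟨fun _ => h, fun hf => absurd rfl hf.ne, fun ha => absurd rfl ha.ne⟩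

theorem of_far (hab : Far a b) (hU : U ≈ₚ b :: t) (hV : V ≈ₚ a :: t) : LcmFactors a b U V :=
  ⟨fun he => absurd he hab.ne, fun _ => ⟨t, hU, hV⟩, fun ha => absurd ha hab.not_adj⟩

theorem of_adj (hab : Adj a b) (hU : U ≈ₚ b :: a :: t) (hV : V ≈ₚ a :: b :: t) :
    LcmFactors a b U V :=
  ⟨fun he => absurd he hab.ne, fun hf => absurd hab hf.not_adj, fun _ => ⟨t, hU, hV⟩⟩

theorem of_eqv_left {U' : List (Fin m)} (h : U ≈ₚ U') (hC : LcmFactors a b U' V) :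
    LcmFactors a b U V where
  eq he := h.trans (hC.eq he)
  far hf := let ⟨t, hU, hV⟩ := hC.far hf; ⟨t, h.trans hU, hV⟩
  adj ha := let ⟨t, hU, hV⟩ := hC.adj ha; ⟨t, h.trans hU, hV⟩

theorem swap_head_of_far (ih : HeadLemmaBelow m N) (hac : Far a c) (hcb : Far c b)
    (hW : W.length ≤ N) (hC : LcmFactors c b (a :: W) V) : LcmFactors a b (c :: W) V := by
  obtain ⟨t₁, h₁, h₂⟩ := hC.far hcb
  have hC₁ := ih W a b t₁ hW h₁
  rcases eq_or_far_or_adj a b with rfl | hab | hab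
  · exact of_eq (((hC₁.eq rfl).cons c).trans h₂.symm)
  · obtain ⟨t₂, h₃, h₄⟩ := hC₁.far hab
    exact of_far hab ((h₃.cons c).trans (.swap hcb t₂))
      (h₂.trans ((h₄.cons c).trans (.swap hac.symm t₂)))
  · obtain ⟨t₂, h₃, h₄⟩ := hC₁.adj hab
    refine of_adj hab (t := c :: t₂) ?_ ?_
    · calc c :: W ≈ₚ c :: b :: a :: t₂ := h₃.cons c
        _ ≈ₚ b :: c :: a :: t₂ := .swap hcb _
        _ ≈ₚ b :: a :: c :: t₂ := (Eqv.swap hac.symm t₂).cons b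
    · calc V ≈ₚ c :: a :: b :: t₂ := h₂.trans (h₄.cons c)
        _ ≈ₚ a :: c :: b :: t₂ := .swap hac.symm _
        _ ≈ₚ a :: b :: c :: t₂ := (Eqv.swap hcb t₂).cons a

theorem swap_head_of_adj (ih : HeadLemmaBelow m N) (hac : Far a c) (hcb : Adj c b)
    (hW : W.length ≤ N) (hC : LcmFactors c b (a :: W) V) : LcmFactors a b (c :: W) V := by
  obtain ⟨t₁, h₁, h₂⟩ := hC.adj hcb
  have ht₁ := h₁.length_eq
  simp only [List.length_cons] at ht₁
  have hC₁ := ih W a b (c :: t₁) hW h₁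
  rcases eq_or_far_or_adj a b with rfl | hab | hab
  · exact absurd hcb.symm hac.not_adj
  · obtain ⟨t₂, h₃, h₄⟩ := hC₁.far hab
    obtain ⟨t₃, h₅, h₆⟩ := (ih t₁ c a t₂ (by omega) h₄).far hac.symm
    refine of_far hab (t := c :: b :: t₃) ?_ ?_
    · calc c :: W ≈ₚ c :: b :: c :: t₃ := (h₃.trans (h₆.cons b)).cons c
        _ ≈ₚ b :: c :: b :: t₃ := .braid hcb _
    · calc V ≈ₚ c :: b :: a :: t₃ := h₂.trans ((h₅.cons b).cons c)
        _ ≈ₚ c :: a :: b :: t₃ := (Eqv.swap hab.symm _).cons c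
        _ ≈ₚ a :: c :: b :: t₃ := .swap hac.symm _
  · obtain ⟨t₂, h₃, h₄⟩ := hC₁.adj hab
    have ht₂ := h₄.length_eq
    simp only [List.length_cons] at ht₂
    obtain ⟨t₃, h₅, h₆⟩ := (ih t₁ c a (b :: t₂) (by omega) h₄).far hac.symm
    obtain ⟨t₄, h₇, h₈⟩ := (ih t₂ b c t₃ (by omega) h₆).adj hcb.symm
    refine of_adj hab (t := c :: b :: a :: t₄) ?_ ?_
    · calc c :: W ≈ₚ c :: b :: a :: c :: b :: t₄ := (h₃.trans ((h₇.cons a).cons b)).cons c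
        _ ≈ₚ c :: b :: c :: a :: b :: t₄ := ((Eqv.swap hac _).cons b).cons c
        _ ≈ₚ b :: c :: b :: a :: b :: t₄ := .braid hcb _
        _ ≈ₚ b :: c :: a :: b :: a :: t₄ := ((Eqv.braid hab.symm _).cons c).cons b
        _ ≈ₚ b :: a :: c :: b :: a :: t₄ := (Eqv.swap hac.symm _).cons b
    · calc V ≈ₚ c :: b :: a :: b :: c :: t₄ := h₂.trans (((h₅.trans (h₈.cons a)).cons b).cons c)
        _ ≈ₚ c :: a :: b :: a :: c :: t₄ := (Eqv.braid hab.symm _).cons c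
        _ ≈ₚ a :: c :: b :: a :: c :: t₄ := .swap hac.symm _
        _ ≈ₚ a :: c :: b :: c :: a :: t₄ := (((Eqv.swap hac _).cons b).cons c).cons a
        _ ≈ₚ a :: b :: c :: b :: a :: t₄ := (Eqv.braid hcb _).cons a

theorem braid_head_of_far (ih : HeadLemmaBelow m N) (hac : Adj a c) (hcb : Far c b)
    (hW : W.length + 1 ≤ N) (hC : LcmFactors c b (a :: c :: W) V) :
    LcmFactors a b (c :: a :: W) V := by
  obtain ⟨t₁, h₁, h₂⟩ := hC.far hcb
  have hC₁ := ih (c :: W) a b t₁ (by simpa using hW) h₁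
  rcases eq_or_far_or_adj a b with rfl | hab | hab
  · exact absurd hac.symm hcb.not_adj
  · obtain ⟨t₂, h₃, h₄⟩ := hC₁.far hab
    obtain ⟨t₃, h₅, h₆⟩ := (ih W c b t₂ (by omega) h₃).far hcb
    refine of_far hab (t := c :: a :: t₃) ?_ ?_
    · calc c :: a :: W ≈ₚ c :: a :: b :: t₃ := (h₅.cons a).cons c
        _ ≈ₚ c :: b :: a :: t₃ := (Eqv.swap hab _).cons c
        _ ≈ₚ b :: c :: a :: t₃ := .swap hcb _
    · calc V ≈ₚ c :: a :: c :: t₃ := h₂.trans ((h₄.trans (h₆.cons a)).cons c)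
        _ ≈ₚ a :: c :: a :: t₃ := .braid hac.symm _
  · obtain ⟨t₂, h₃, h₄⟩ := hC₁.adj hab
    have ht₂ := h₃.length_eq
    simp only [List.length_cons] at ht₂
    obtain ⟨t₃, h₅, h₆⟩ := (ih W c b (a :: t₂) (by omega) h₃).far hcb
    obtain ⟨t₄, h₇, h₈⟩ := (ih t₂ a c t₃ (by omega) h₆).adj hac
    refine of_adj hab (t := c :: a :: b :: t₄) ?_ ?_
    · calc c :: a :: W ≈ₚ c :: a :: b :: a :: c :: t₄ := ((h₅.trans (h₈.cons b)).cons a).cons c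
        _ ≈ₚ c :: b :: a :: b :: c :: t₄ := (Eqv.braid hab _).cons c
        _ ≈ₚ b :: c :: a :: b :: c :: t₄ := .swap hcb _
        _ ≈ₚ b :: c :: a :: c :: b :: t₄ := (((Eqv.swap hcb.symm _).cons a).cons c).cons b
        _ ≈ₚ b :: a :: c :: a :: b :: t₄ := (Eqv.braid hac.symm _).cons b
    · calc V ≈ₚ c :: a :: b :: c :: a :: t₄ := h₂.trans ((h₄.trans ((h₇.cons b).cons a)).cons c)
        _ ≈ₚ c :: a :: c :: b :: a :: t₄ := ((Eqv.swap hcb.symm _).cons a).cons c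
        _ ≈ₚ a :: c :: a :: b :: a :: t₄ := .braid hac.symm _
        _ ≈ₚ a :: c :: b :: a :: b :: t₄ := ((Eqv.braid hab _).cons c).cons a
        _ ≈ₚ a :: b :: c :: a :: b :: t₄ := (Eqv.swap hcb _).cons a

theorem braid_head_of_adj (ih : HeadLemmaBelow m N) (hac : Adj a c) (hcb : Adj c b)
    (hW : W.length + 1 ≤ N) (hC : LcmFactors c b (a :: c :: W) V) :
    LcmFactors a b (c :: a :: W) V := by
  obtain ⟨t₁, h₁, h₂⟩ := hC.adj hcb
  have hC₁ := ih (c :: W) a b (c :: t₁) (by simpa using hW) h₁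
  rcases eq_or_far_or_adj a b with rfl | hab | hab
  · have h₃ := (ih W c c t₁ (by omega) (hC₁.eq rfl)).eq rfl
    exact of_eq (((h₃.cons a).cons c).trans h₂.symm)
  · obtain ⟨t₂, h₃, h₄⟩ := hC₁.far hab
    have ht₂ := h₃.length_eq
    simp only [List.length_cons] at ht₂
    obtain ⟨t₃, h₅, h₆⟩ := (ih W c b t₂ (by omega) h₃).adj hcb
    have ht₃ := h₆.length_eq
    have ht₁ := h₄.length_eq
    simp only [List.length_cons] at ht₃ ht₁
    obtain ⟨t₄, h₇, h₈⟩ := (ih t₁ c a t₂ (by omega) h₄).adj hac.symm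
    -- `c` is cancelled from `c :: b :: t₃ ≈ₚ t₂ ≈ₚ c :: a :: t₄` by the inductive hypothesis
    have h₉ := (ih (b :: t₃) c c (a :: t₄) (by simp; omega) (h₆.symm.trans h₈)).eq rfl
    obtain ⟨t₅, h₁₀, h₁₁⟩ := (ih t₃ b a t₄ (by omega) h₉).far hab.symm
    refine of_far hab (t := c :: b :: a :: c :: t₅) ?_ ?_
    · calc c :: a :: W ≈ₚ c :: a :: b :: c :: a :: t₅ :=
            (((h₅.trans ((h₁₀.cons c).cons b)).cons a).cons c)
        _ ≈ₚ c :: b :: a :: c :: a :: t₅ := (Eqv.swap hab _).cons c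
        _ ≈ₚ c :: b :: c :: a :: c :: t₅ := ((Eqv.braid hac _).cons b).cons c
        _ ≈ₚ b :: c :: b :: a :: c :: t₅ := .braid hcb _
    · calc V ≈ₚ c :: b :: a :: c :: b :: t₅ :=
            h₂.trans (((h₇.trans (((h₁₁.cons c).cons a))).cons b).cons c)
        _ ≈ₚ c :: a :: b :: c :: b :: t₅ := (Eqv.swap hab.symm _).cons c
        _ ≈ₚ c :: a :: c :: b :: c :: t₅ := ((Eqv.braid hcb.symm _).cons a).cons c
        _ ≈ₚ a :: c :: a :: b :: c :: t₅ := .braid hac.symm _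
        _ ≈ₚ a :: c :: b :: a :: c :: t₅ := ((Eqv.swap hab _).cons c).cons a
  · unfold Adj at hac hcb hab
    omega

theorem swap_head (ih : HeadLemmaBelow m N) (hac : Far a c) (hW : W.length ≤ N)
    (hC : LcmFactors c b (a :: W) V) : LcmFactors a b (c :: W) V := by
  rcases eq_or_far_or_adj c b with rfl | hcb | hcb
  · exact of_far hac (.refl _) (hC.eq rfl).symm
  · exact swap_head_of_far ih hac hcb hW hC
  · exact swap_head_of_adj ih hac hcb hW hC

theorem braid_head (ih : HeadLemmaBelow m N) (hac : Adj a c) (hW : W.length + 1 ≤ N)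
    (hC : LcmFactors c b (a :: c :: W) V) : LcmFactors a b (c :: a :: W) V := by
  rcases eq_or_far_or_adj c b with rfl | hcb | hcb
  · exact of_adj hac (.refl _) (hC.eq rfl).symm
  · exact braid_head_of_far ih hac hcb hW hC
  · exact braid_head_of_adj ih hac hcb hW hC

theorem of_step {c : Fin m} {U' : List (Fin m)} (ih : HeadLemmaBelow m N)
    (hU : U.length ≤ N + 1) (hs : Step (a :: U) (c :: U')) (hC : LcmFactors c b U' V) :
    LcmFactors a b U V := by
  rcases hs.cons_cases with ⟨rfl, hU'⟩ | ⟨W, hac, rfl, rfl⟩ | ⟨W, hac, rfl, rfl⟩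
  · exact hC.of_eqv_left (.single hU')
  · exact swap_head ih hac (by simpa using hU) hC
  · exact braid_head ih hac (by simpa using hU) hC

end LcmFactors

theorem headLemmaBelow : ∀ N, HeadLemmaBelow m N
  | 0 => fun U a b V hU h => by
    obtain rfl : U = [] := List.eq_nil_of_length_eq_zero (by omega)
    obtain ⟨rfl, rfl⟩ := List.cons_eq_cons.mp h.eq_of_singleton
    exact .of_eq (.refl _)
  | N + 1 => fun U a b V hU h => by
    -- induction along the chain of steps from `a :: U` to `b :: V`
    suffices ∀ X, X ≈ₚ b :: V → ∀ a U, X = a :: U → U.length ≤ N + 1 → LcmFactors a b U V from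
      this _ h a U rfl hU
    intro X hX
    induction hX using Relation.ReflTransGen.head_induction_on with
    | refl =>
      rintro a U hU -
      obtain ⟨rfl, rfl⟩ := List.cons_eq_cons.mp hU
      exact .of_eq (.refl _)
    | head hs _ ih =>
      rintro a U rfl hU
      have hlen := hs.length_eq
      obtain ⟨c, U', rfl⟩ := List.exists_of_length_succ _ hlen.symm
      simp only [List.length_cons, add_left_inj] at hlen
      exact (ih c U' rfl (hlen ▸ hU)).of_step (headLemmaBelow N) hU hs

theorem LcmFactors.of_eqv {a b : Fin m} {U V : List (Fin m)} (h : a :: U ≈ₚ b :: V) :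
    LcmFactors a b U V :=
  headLemmaBelow _ U a b V le_rfl h

theorem Eqv.cons_cancel {a : Fin m} {u v : List (Fin m)} (h : a :: u ≈ₚ a :: v) : u ≈ₚ v :=
  (LcmFactors.of_eqv h).eq rfl

theorem Eqv.append_cancel_left {u v w : List (Fin m)} (h : u ++ v ≈ₚ u ++ w) : v ≈ₚ w := by
  induction u with
  | nil => exact h
  | cons c u ih => exact ih h.cons_cancel

def desc : (k : ℕ) → k ≤ m → List (Fin m)
  | 0, _ => []
  | k + 1, h => ⟨k, h⟩ :: desc k (Nat.le_of_succ_le h)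

def asc : (k : ℕ) → k ≤ m → List (Fin m)
  | 0, _ => []
  | k + 1, h => asc k (Nat.le_of_succ_le h) ++ [⟨k, h⟩]

/-- Garside's word `Δ` in the letters `σ_0, …, σ_{k-1}`, written as
`σ_0 (σ_1 σ_0) ⋯ (σ_{k-1} ⋯ σ_0)`. -/
def delta : (k : ℕ) → k ≤ m → List (Fin m)
  | 0, _ => []
  | k + 1, h => delta k (Nat.le_of_succ_le h) ++ desc (k + 1) h

theorem lt_of_mem_desc {k : ℕ} (h : k ≤ m) : ∀ x ∈ desc k h, (x : ℕ) < k := by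
  induction k with
  | zero => simp [desc]
  | succ k ih =>
    simp only [desc, List.mem_cons, forall_eq_or_imp]
    exact ⟨k.lt_succ_self, fun x hx => (ih _ x hx).trans k.lt_succ_self⟩

theorem lt_of_mem_asc {k : ℕ} (h : k ≤ m) : ∀ x ∈ asc k h, (x : ℕ) < k := by
  induction k with
  | zero => simp [asc]
  | succ k ih =>
    simp only [asc, List.mem_append, List.mem_singleton]
    rintro x (hx | rfl)
    · exact (ih _ x hx).trans k.lt_succ_self
    · exact k.lt_succ_self

theorem lt_of_mem_delta {k : ℕ} (h : k ≤ m) : ∀ x ∈ delta k h, (x : ℕ) < k := by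
  induction k with
  | zero => simp [delta]
  | succ k ih =>
    simp only [delta, List.mem_append]
    rintro x (hx | hx)
    · exact (ih _ x hx).trans k.lt_succ_self
    · exact lt_of_mem_desc h x hx

theorem length_desc (k : ℕ) (h : k ≤ m) : (desc k h).length = k := by
  induction k with
  | zero => rfl
  | succ k ih => simp [desc, ih]

theorem length_delta_pos {k : ℕ} (hk : 0 < k) (h : k ≤ m) : 0 < (delta k h).length := by
  obtain ⟨k, rfl⟩ := Nat.exists_eq_add_of_lt hk
  simp [delta, length_desc]

theorem Eqv.cons_append_of_far {c : Fin m} {u : List (Fin m)} (hu : ∀ x ∈ u, Far c x)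
    (v : List (Fin m)) : c :: (u ++ v) ≈ₚ u ++ c :: v := by
  induction u with
  | nil => rfl
  | cons d u ih =>
    simp only [List.mem_cons, forall_eq_or_imp] at hu
    exact (Eqv.swap hu.1 _).trans ((ih hu.2).cons d)

theorem cons_desc {i k : ℕ} (hik : i + 1 ≤ k) (hk : k + 1 ≤ m) :
    (⟨i, by omega⟩ : Fin m) :: desc (k + 1) hk ≈ₚ desc (k + 1) hk ++ [⟨i + 1, by omega⟩] := by
  induction k with
  | zero => omega
  | succ k ih =>
    rcases Nat.lt_or_ge (i + 1) (k + 1) with hlt | hge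
    · have hfar : Far (⟨i, by omega⟩ : Fin m) ⟨k + 1, hk⟩ := Or.inl (by simp; omega)
      exact (Eqv.swap hfar _).trans ((ih (by omega) (by omega)).cons _)
    · obtain rfl : i = k := by omega
      have hpass := Eqv.cons_append_of_far (c := (⟨i + 1, hk⟩ : Fin m)) (u := desc i (by omega))
        (fun x hx => Or.inr (by have := lt_of_mem_desc _ x hx; simp; omega)) []
      simp only [List.append_nil] at hpass
      calc _ ≈ₚ (⟨i + 1, hk⟩ : Fin m) :: ⟨i, by omega⟩ :: ⟨i + 1, hk⟩ :: desc i (by omega) :=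
            .braid (Or.inl rfl) _
        _ ≈ₚ _ := by simpa [desc] using (hpass.cons _).cons _

theorem delta_succ_eqv (k : ℕ) (hk : k + 1 ≤ m) :
    delta (k + 1) hk ≈ₚ asc (k + 1) hk ++ delta k (Nat.le_of_succ_le hk) := by
  induction k with
  | zero => rfl
  | succ k ih =>
    have hpass := Eqv.cons_append_of_far (c := (⟨k + 1, hk⟩ : Fin m)) (u := delta k (by omega))
      (fun x hx => Or.inr (by have := lt_of_mem_delta _ x hx; simp; omega))
      (desc (k + 1) (by omega))
    calc delta (k + 2) hk
        ≈ₚ asc (k + 1) (by omega) ++ delta k (by omega) ++ desc (k + 2) hk :=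
          (ih (by omega)).append_right _
      _ ≈ₚ asc (k + 2) hk ++ delta (k + 1) (by omega) := by
          simpa [asc, delta, desc] using (hpass.append_left (asc (k + 1) (by omega))).symm

theorem cons_asc (k : ℕ) (hk : k + 2 ≤ m) :
    (⟨k + 1, by omega⟩ : Fin m) :: asc (k + 2) hk ≈ₚ asc (k + 2) hk ++ [⟨k, by omega⟩] := by
  have hpass := Eqv.cons_append_of_far (c := (⟨k + 1, by omega⟩ : Fin m)) (u := asc k (by omega))
    (fun x hx => Or.inr (by have := lt_of_mem_asc _ x hx; simp; omega))
    [⟨k, by omega⟩, ⟨k + 1, by omega⟩]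
  have hbraid := (Eqv.braid (a := (⟨k, by omega⟩ : Fin m)) (b := ⟨k + 1, hk⟩) (Or.inl rfl) []).symm
  simpa [asc] using hpass.trans (hbraid.append_left _)

theorem cons_delta (k : ℕ) (hk : k ≤ m) (i j : ℕ) (hi : i < k) (hj : j + 1 + i = k) :
    (⟨i, by omega⟩ : Fin m) :: delta k hk ≈ₚ delta k hk ++ [⟨j, by omega⟩] := by
  induction k generalizing i j with
  | zero => omega
  | succ k ih =>
    rcases Nat.lt_or_ge i k with hik | hik
    · obtain ⟨j, rfl⟩ : ∃ j', j = j' + 1 := ⟨j - 1, by omega⟩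
      calc _ ≈ₚ delta k (by omega) ++ (⟨j, by omega⟩ : Fin m) :: desc (k + 1) hk := by
            simpa [delta] using (ih (by omega) i j hik (by omega)).append_right (desc (k + 1) hk)
        _ ≈ₚ _ := by
            simpa [delta] using (cons_desc (i := j) (by omega) hk).append_left (delta k (by omega))
    · obtain rfl : i = k := by omega
      obtain rfl : j = 0 := by omega
      rcases Nat.eq_zero_or_pos i with rfl | hpos
      · rfl
      obtain ⟨k, rfl⟩ : ∃ k, i = k + 1 := ⟨i - 1, by omega⟩
      calc _ ≈ₚ (⟨k + 1, by omega⟩ : Fin m) :: (asc (k + 2) hk ++ delta (k + 1) (by omega)) :=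
            (delta_succ_eqv (k + 1) hk).cons _
        _ ≈ₚ asc (k + 2) hk ++ (⟨k, by omega⟩ : Fin m) :: delta (k + 1) (by omega) := by
            simpa using (cons_asc k hk).append_right (delta (k + 1) _)
        _ ≈ₚ asc (k + 2) hk ++ delta (k + 1) (by omega) ++ [⟨0, _⟩] := by
            simpa using (ih (by omega) k 0 (by omega) (by omega)).append_left (asc (k + 2) hk)
        _ ≈ₚ _ := (delta_succ_eqv (k + 1) hk).symm.append_right _

def garside (m : ℕ) : List (Fin m) := delta m le_rfl

theorem cons_garside (i : Fin m) : i :: garside m ≈ₚ garside m ++ [i.rev] := by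
  unfold garside
  convert cons_delta m le_rfl i (m - 1 - i) i.isLt (by omega) using 3
  ext
  simp only [Fin.val_rev]
  omega

def LeftDvd (u v : List (Fin m)) : Prop := ∃ w, v ≈ₚ u ++ w

theorem exists_eqv_cons_of_far {c : Fin m} {u v z : List (Fin m)} (hu : ∀ x ∈ u, Far c x)
    (h : u ++ v ≈ₚ c :: z) : ∃ z', v ≈ₚ c :: z' := by
  induction u generalizing z with
  | nil => exact ⟨z, h⟩
  | cons d u ih =>
    simp only [List.mem_cons, forall_eq_or_imp] at hu
    obtain ⟨t, ht, -⟩ := (LcmFactors.of_eqv h).far hu.1.symm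
    exact ih hu.2 ht

def descFrom (j : ℕ) : (l : ℕ) → j + l ≤ m → List (Fin m)
  | 0, _ => []
  | l + 1, h => ⟨j + l, h⟩ :: descFrom j l (by omega)

theorem descFrom_zero (k : ℕ) (h : k ≤ m) : descFrom 0 k (by omega) = desc k h := by
  induction k with
  | zero => rfl
  | succ k ih => simp only [descFrom, desc, ih (Nat.le_of_succ_le h), zero_add]

/-- The least common multiple of `σ_j` and `σ_{j+l} ⋯ σ_{j+1}` is `σ_j σ_{j+l} ⋯ σ_{j+1} σ_j`. -/
theorem exists_eqv_descFrom_of_cons {j l : ℕ} (hl : 1 ≤ l) (h : j + 1 + l ≤ m)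
    {v z : List (Fin m)} (hv : (⟨j, by omega⟩ : Fin m) :: v ≈ₚ descFrom (j + 1) l h ++ z) :
    ∃ w, v ≈ₚ descFrom j (l + 1) (by omega) ++ w := by
  induction l generalizing v z with
  | zero => omega
  | succ l ih =>
    rcases Nat.eq_zero_or_pos l with rfl | hpos
    · obtain ⟨t, ht, -⟩ := (LcmFactors.of_eqv hv).adj (Or.inl rfl)
      exact ⟨t, ht⟩
    · have hfar : Far (⟨j, by omega⟩ : Fin m) ⟨j + 1 + l, h⟩ := Or.inl (by simp; omega)
      obtain ⟨t, ht, ht'⟩ := (LcmFactors.of_eqv hv).far hfar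
      obtain ⟨w, hw⟩ := ih hpos (by omega) ht'.symm
      refine ⟨w, ht.trans ?_⟩
      rw [descFrom, List.cons_append]
      convert hw.cons _ using 2
      ext
      simp only
      omega

theorem exists_eqv_desc_append {j l k : ℕ} (hl : 1 ≤ l) (h : j + l ≤ m) (hk : k ≤ m)
    (hjk : j + l = k) {y z : List (Fin m)} (hy : desc j (by omega) ++ y ≈ₚ descFrom j l h ++ z) :
    ∃ w, y ≈ₚ desc k hk ++ w := by
  induction j generalizing l z with
  | zero =>
    obtain rfl : l = k := by omega
    rw [descFrom_zero l hk] at hy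
    exact ⟨z, by simpa [desc] using hy⟩
  | succ j ih =>
    obtain ⟨w, hw⟩ := exists_eqv_descFrom_of_cons hl h hy
    exact ih (by omega) _ (by omega) hw

theorem exists_eqv_desc_of_delta_append {k : ℕ} (hk : k + 1 ≤ m) {y z : List (Fin m)}
    (h : delta k (Nat.le_of_succ_le hk) ++ y ≈ₚ ⟨k, hk⟩ :: z) :
    ∃ w, y ≈ₚ desc (k + 1) hk ++ w := by
  rcases k with _ | k
  · exact ⟨z, by simpa [delta, desc] using h⟩
  have hk' : k ≤ m := by omega
  obtain ⟨z', hz'⟩ := exists_eqv_cons_of_far (c := ⟨k + 1, hk⟩) (u := delta k hk')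
    (fun x hx => Or.inr (by have := lt_of_mem_delta _ x hx; simp; omega))
    (by simpa [delta] using h)
  exact exists_eqv_desc_append (l := 1) le_rfl hk hk rfl hz'

theorem leftDvd_delta_of_forall {x : List (Fin m)} (h : ∀ i, LeftDvd [i] x) :
    ∀ k (hk : k ≤ m), LeftDvd (delta k hk) x
  | 0, _ => ⟨x, .refl _⟩
  | k + 1, hk => by
    obtain ⟨y, hy⟩ := leftDvd_delta_of_forall h k (Nat.le_of_succ_le hk)
    obtain ⟨z, hz⟩ := h ⟨k, hk⟩
    obtain ⟨w, hw⟩ := exists_eqv_desc_of_delta_append hk (hy.symm.trans hz)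
    exact ⟨w, hy.trans (by simpa [delta] using hw.append_left _)⟩

def QuasiCentral (f : Fin m → Fin m) (p : List (Fin m)) : Prop := ∀ i, i :: p ≈ₚ p ++ [f i]

namespace QuasiCentral

variable {f : Fin m → Fin m} {p : List (Fin m)}

theorem leftDvd_of_adj (hp : QuasiCentral f p) {a b : Fin m} (hab : Adj a b)
    (ha : LeftDvd [a] p) : LeftDvd [b] p := by
  obtain ⟨q, hq⟩ := ha
  obtain ⟨w, hw, -⟩ := (LcmFactors.of_eqv ((hp b).trans (hq.append_right [f b]))).adj hab.symm
  have h : a :: b :: w ≈ₚ b :: (w ++ [f a]) :=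
    Eqv.cons_cancel (((hw.cons a).symm.trans (hp a)).trans (hw.append_right _))
  obtain ⟨t, ht, -⟩ := (LcmFactors.of_eqv h).adj hab
  exact ⟨a :: b :: t, hw.trans (((ht.cons_cancel.cons b).cons a).trans (.braid hab t))⟩

theorem leftDvd (hp : QuasiCentral f p) {a : Fin m} (ha : LeftDvd [a] p) (b : Fin m) :
    LeftDvd [b] p := by
  have hzero : ∀ k (hk : k < m), LeftDvd [⟨k, hk⟩] p ↔ LeftDvd [⟨0, by omega⟩] p := by
    intro k hk
    induction k with
    | zero => rfl
    | succ k ih =>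
      rw [← ih (by omega)]
      exact ⟨hp.leftDvd_of_adj (Or.inr rfl), hp.leftDvd_of_adj (Or.inl rfl)⟩
  exact (hzero b b.isLt).mpr ((hzero a a.isLt).mp ha)

end QuasiCentral

theorem length_garside_pos (hm : 0 < m) : 0 < (garside m).length := length_delta_pos hm le_rfl

def garsidePow (m : ℕ) : ℕ → List (Fin m)
  | 0 => []
  | s + 1 => garside m ++ garsidePow m s

theorem QuasiCentral.exists_eqv_garsidePow {f : Fin m → Fin m} {p : List (Fin m)}
    (hp : QuasiCentral f p) : ∃ s, p ≈ₚ garsidePow m s := by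
  induction hlen : p.length using Nat.strong_induction_on generalizing f p with
  | _ N ih =>
    rcases p with _ | ⟨c, t⟩
    · exact ⟨0, .refl _⟩
    obtain ⟨p₁, hp₁⟩ : LeftDvd (garside m) (c :: t) :=
      leftDvd_delta_of_forall (hp.leftDvd ⟨t, .refl _⟩) m le_rfl
    have hq : QuasiCentral (f ∘ Fin.rev) p₁ := fun j => by
      refine Eqv.append_cancel_left (u := garside m) ?_
      calc garside m ++ j :: p₁ ≈ₚ j.rev :: (garside m ++ p₁) := by
            simpa using ((cons_garside j.rev).append_right p₁).symm
        _ ≈ₚ j.rev :: c :: t := hp₁.symm.cons _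
        _ ≈ₚ garside m ++ (p₁ ++ [f j.rev]) := by
            simpa using (hp j.rev).trans (hp₁.append_right _)
    have hshorter : p₁.length < N := by
      have := hp₁.length_eq
      have := length_garside_pos c.pos
      simp only [List.length_append, List.length_cons] at *
      omega
    obtain ⟨s, hs⟩ := ih _ hshorter hq rfl
    exact ⟨s + 1, hp₁.trans (hs.append_left _)⟩

theorem leftDvd_garside (i : Fin m) : LeftDvd [i] (garside m) := by
  obtain ⟨c, t, ht⟩ := List.exists_cons_of_length_pos (length_garside_pos i.pos)
  exact QuasiCentral.leftDvd cons_garside ⟨t, by rw [ht]; rfl⟩ i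

theorem length_garsidePow_pos {s : ℕ} (hm : 0 < m) (hs : 0 < s) :
    0 < (garsidePow m s).length := by
  obtain ⟨s, rfl⟩ := Nat.exists_eq_add_of_lt hs
  simpa [garsidePow] using Or.inl (length_garside_pos hm)

theorem Eqv.prod_map_eq {M : Type*} [Monoid M] {f : Fin m → M}
    (hfar : ∀ a b, Far a b → f a * f b = f b * f a)
    (hadj : ∀ a b, Adj a b → f a * f b * f a = f b * f a * f b) {u v : List (Fin m)}
    (h : u ≈ₚ v) : (u.map f).prod = (v.map f).prod := by
  induction h with
  | refl => rfl
  | tail _ hs ih =>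
    rw [ih]
    cases hs with
    | swap x y hab =>
      have h := congrArg (· * (y.map f).prod) (hfar _ _ hab)
      simp only [mul_assoc] at h
      simp only [List.map_append, List.map_cons, List.prod_append, List.prod_cons, h]
    | braid x y hab =>
      have h := congrArg (· * (y.map f).prod) (hadj _ _ hab)
      simp only [mul_assoc] at h
      simp only [List.map_append, List.map_cons, List.prod_append, List.prod_cons, h]

end BraidWord

open BraidWord OreLocalization

def positiveBraidCon (m : ℕ) : Con (FreeMonoid (Fin m)) where
  r u v := u.toList ≈ₚ v.toList
  iseqv := ⟨fun _ => .refl _, Eqv.symm, Eqv.trans⟩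
  mul' h h' := Eqv.append h h'

abbrev PositiveBraid (m : ℕ) : Type := (positiveBraidCon m).Quotient

namespace PositiveBraid

variable {m : ℕ}

def mk (w : List (Fin m)) : PositiveBraid m := (FreeMonoid.ofList w : FreeMonoid (Fin m))

theorem mk_eq_mk {u v : List (Fin m)} : mk u = mk v ↔ u ≈ₚ v := Con.eq _

theorem mk_append (u v : List (Fin m)) : mk (u ++ v) = mk u * mk v := rfl

theorem exists_mk_eq (x : PositiveBraid m) : ∃ w, mk w = x :=
  Con.induction_on x fun w => ⟨w.toList, rfl⟩

def gen (i : Fin m) : PositiveBraid m := mk [i]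

theorem mk_cons (a : Fin m) (w : List (Fin m)) : mk (a :: w) = gen a * mk w := rfl

def delta (m : ℕ) : PositiveBraid m := mk (garside m)

instance : IsLeftCancelMul (PositiveBraid m) where
  mul_left_cancel x y z h := by
    obtain ⟨u, rfl⟩ := exists_mk_eq x
    obtain ⟨v, rfl⟩ := exists_mk_eq y
    obtain ⟨w, rfl⟩ := exists_mk_eq z
    exact mk_eq_mk.2 (mk_eq_mk.1 h).append_cancel_left

theorem gen_injective : Function.Injective (gen (m := m)) := fun a b h => by
  simpa using (mk_eq_mk.1 h).eq_of_singleton.symm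

theorem gen_mul_comm_of_far {a b : Fin m} (h : Far a b) : gen a * gen b = gen b * gen a :=
  mk_eq_mk.2 (.swap h [])

theorem gen_braid_of_adj {a b : Fin m} (h : Adj a b) :
    gen a * gen b * gen a = gen b * gen a * gen b :=
  mk_eq_mk.2 (.braid h [])

theorem gen_mul_delta (i : Fin m) : gen i * delta m = delta m * gen i.rev :=
  mk_eq_mk.2 (cons_garside i)

theorem commute_delta_sq (x : PositiveBraid m) : Commute (delta m ^ 2) x := by
  obtain ⟨w, rfl⟩ := exists_mk_eq x
  induction w with
  | nil => exact Commute.one_right _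
  | cons a w ih =>
    rw [mk_cons]
    refine Commute.mul_right (Eq.symm ?_) ih
    rw [sq, ← mul_assoc, gen_mul_delta, mul_assoc, gen_mul_delta, Fin.rev_rev, mul_assoc]

theorem exists_mul_eq_delta_sq (i : Fin m) :
    ∃ x, gen i * x = delta m ^ 2 ∧ x * gen i = delta m ^ 2 := by
  obtain ⟨y, hy⟩ := leftDvd_garside i
  have hy : delta m = gen i * mk y := mk_eq_mk.2 hy
  refine ⟨mk y * delta m, by rw [← mul_assoc, ← hy, sq], mul_left_cancel (a := gen i) ?_⟩
  rw [← mul_assoc, ← mul_assoc, ← hy, ← sq, (commute_delta_sq _).eq]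

theorem mk_garsidePow (s : ℕ) : mk (garsidePow m s) = delta m ^ s := by
  induction s with
  | zero => rfl
  | succ s ih => rw [garsidePow, mk_append, ih, pow_succ', delta]

theorem eq_delta_pow_of_commute {x : PositiveBraid m} (hx : ∀ i, Commute (gen i) x) :
    ∃ s, x = delta m ^ s := by
  obtain ⟨p, rfl⟩ := exists_mk_eq x
  have hp : QuasiCentral id p := fun i => mk_eq_mk.1 (hx i).eq
  obtain ⟨s, hs⟩ := hp.exists_eqv_garsidePow
  exact ⟨s, by rw [mk_eq_mk.2 hs, mk_garsidePow]⟩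

theorem eq_zero_of_delta_pow_eq_one (hm : 0 < m) {s : ℕ} (h : delta m ^ s = 1) : s = 0 := by
  by_contra hs
  have := (mk_eq_mk.1 ((mk_garsidePow s).trans h)).length_eq
  have := length_garsidePow_pos hm (Nat.pos_of_ne_zero hs)
  simp_all

abbrev deltaSqPowers (m : ℕ) : Submonoid (PositiveBraid m) := Submonoid.powers (delta m ^ 2)

theorem commute_of_mem_deltaSqPowers {s : PositiveBraid m} (hs : s ∈ deltaSqPowers m)
    (x : PositiveBraid m) : Commute s x := by
  obtain ⟨k, rfl⟩ := hs
  exact (commute_delta_sq x).pow_left k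

instance : OreSet (deltaSqPowers m) where
  ore_right_cancel r₁ r₂ s h :=
    ⟨s, by rw [(commute_of_mem_deltaSqPowers s.2 r₁).eq, h,
      (commute_of_mem_deltaSqPowers s.2 r₂).eq]⟩
  oreNum r _ := r
  oreDenom _ s := s
  ore_eq r s := (commute_of_mem_deltaSqPowers s.2 r).eq

abbrev Fractions (m : ℕ) : Type := OreLocalization (deltaSqPowers m) (PositiveBraid m)

theorem numeratorHom_injective :
    Function.Injective (numeratorHom (S := deltaSqPowers m)) := by
  intro x y h
  obtain ⟨u, v, h₁, h₂⟩ := oreDiv_eq_iff.mp h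
  simp only [OneMemClass.coe_one, mul_one] at h₂
  rw [Submonoid.smul_def, smul_eq_mul, h₂, smul_eq_mul] at h₁
  exact (mul_left_cancel h₁).symm

theorem isUnit_numeratorHom_gen (i : Fin m) :
    IsUnit (numeratorHom (S := deltaSqPowers m) (gen i)) := by
  obtain ⟨x, h₁, h₂⟩ := exists_mul_eq_delta_sq i
  have hΔ := numerator_isUnit (⟨_, Submonoid.mem_powers _⟩ : deltaSqPowers m)
  refine isUnit_iff_exists_and_exists.mpr
    ⟨⟨numeratorHom x * (↑hΔ.unit⁻¹ : Fractions m), ?_⟩,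
      ⟨(↑hΔ.unit⁻¹ : Fractions m) * numeratorHom x, ?_⟩⟩
  · rw [← mul_assoc, ← map_mul, h₁, hΔ.mul_val_inv]
  · rw [mul_assoc, ← map_mul, h₂, hΔ.val_inv_mul]

end PositiveBraid

namespace BraidGroup

variable {n : ℕ}

theorem braidGen_mul_comm_of_far {a b : Fin (n - 1)} (h : Far a b) :
    braidGen n a * braidGen n b = braidGen n b * braidGen n a := by
  wlog hab : (b : ℕ) + 2 ≤ a generalizing a b
  · exact (this h.symm (h.resolve_right hab)).symm
  have h := PresentedGroup.mk_eq_mk_of_mul_inv_mem (rels := braidRels n)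
    (x := .of a * .of b) (y := .of b * .of a) (Or.inl ⟨a, b, hab, by group⟩)
  simp only [map_mul] at h
  exact h

theorem braidGen_braid_of_adj {a b : Fin (n - 1)} (h : Adj a b) :
    braidGen n a * braidGen n b * braidGen n a = braidGen n b * braidGen n a * braidGen n b := by
  wlog hab : (b : ℕ) = a + 1 generalizing a b
  · exact (this h.symm (h.resolve_left hab)).symm
  have h := PresentedGroup.mk_eq_mk_of_mul_inv_mem (rels := braidRels n)
    (x := .of a * .of b * .of a) (y := .of b * .of a * .of b) (Or.inr ⟨a, b, hab, rfl⟩)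
  simp only [map_mul] at h
  exact h

theorem lift_eq_one_of_mem_braidRels {G : Type*} [Group G] {f : Fin (n - 1) → G}
    (hfar : ∀ a b, Far a b → f a * f b = f b * f a)
    (hadj : ∀ a b, Adj a b → f a * f b * f a = f b * f a * f b) :
    ∀ r ∈ braidRels n, FreeGroup.lift f r = 1 := by
  rintro r (⟨i, j, hij, rfl⟩ | ⟨i, j, hij, rfl⟩) <;>
    simp only [map_mul, map_inv, FreeGroup.lift_apply_of]
  · rw [hfar i j (Or.inr hij)]
    group
  · rw [hadj i j (Or.inl hij)]
    group

end BraidGroup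

namespace PositiveBraid

variable {n : ℕ}

def toBraidGroup (n : ℕ) : PositiveBraid (n - 1) →* BraidGroup n :=
  (positiveBraidCon (n - 1)).lift (FreeMonoid.lift (braidGen n)) fun u v h => by
    rw [Con.ker_rel, FreeMonoid.lift_apply, FreeMonoid.lift_apply]
    exact h.prod_map_eq (fun _ _ => BraidGroup.braidGen_mul_comm_of_far)
      (fun _ _ => BraidGroup.braidGen_braid_of_adj)

theorem toBraidGroup_mk (w : List (Fin (n - 1))) :
    toBraidGroup n (mk w) = (w.map (braidGen n)).prod :=
  FreeMonoid.lift_ofList _ _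

theorem toBraidGroup_gen (i : Fin (n - 1)) : toBraidGroup n (gen i) = braidGen n i := by
  simp [gen, toBraidGroup_mk]

noncomputable def toUnits (n : ℕ) : BraidGroup n →* (Fractions (n - 1))ˣ :=
  PresentedGroup.toGroup (f := fun i => (isUnit_numeratorHom_gen i).unit)
    (BraidGroup.lift_eq_one_of_mem_braidRels
      (fun a b h => Units.ext (by simp [gen_mul_comm_of_far h]))
      (fun a b h => Units.ext (by simp [gen_braid_of_adj h])))

theorem toUnits_toBraidGroup (x : PositiveBraid (n - 1)) :
    (toUnits n (toBraidGroup n x) : Fractions (n - 1)) = numeratorHom x := by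
  obtain ⟨w, rfl⟩ := exists_mk_eq x
  induction w with
  | nil => rw [show mk [] = 1 from rfl, map_one, map_one, map_one, Units.val_one]
  | cons a w ih =>
    rw [mk_cons, map_mul, map_mul, Units.val_mul, ih, toBraidGroup_gen, map_mul]
    simp [toUnits, braidGen]

theorem toBraidGroup_injective : Function.Injective (toBraidGroup n) := fun x y h =>
  numeratorHom_injective (by rw [← toUnits_toBraidGroup, h, toUnits_toBraidGroup])

theorem map_braidGen_desc (k : ℕ) (h : k ≤ n - 1) :
    (desc k h).map (braidGen n) = ((List.range k).reverse).map (braidGen' n) := by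
  induction k with
  | zero => rfl
  | succ k ih =>
    rw [desc, List.range_succ, List.reverse_append, List.map_cons, ih]
    simp [braidGen', Nat.lt_of_succ_le h]

theorem toBraidGroup_delta : toBraidGroup n (delta (n - 1)) = braidDelta n := by
  suffices ∀ k (h : k ≤ n - 1), toBraidGroup n (mk (BraidWord.delta k h)) =
      ((List.range k).map fun a => ((List.range (a + 1)).reverse.map (braidGen' n)).prod).prod from
    this _ le_rfl
  intro k h
  induction k with
  | zero => rfl
  | succ k ih =>
    rw [BraidWord.delta, mk_append, map_mul, ih, toBraidGroup_mk, map_braidGen_desc,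
      List.range_succ (n := k), List.map_append, List.prod_append, List.map_singleton,
      List.prod_singleton, List.range_succ]

end PositiveBraid

open PositiveBraid

namespace BraidGroup

variable {n : ℕ}

theorem braidGen_mul_braidDelta (i : Fin (n - 1)) :
    braidGen n i * braidDelta n = braidDelta n * braidGen n i.rev := by
  simpa [toBraidGroup_gen, toBraidGroup_delta] using congrArg (toBraidGroup n) (gen_mul_delta i)

theorem braidDelta_sq_mem_center : braidDelta n ^ 2 ∈ Subgroup.center (BraidGroup n) := by
  refine Subgroup.mem_center_iff.mpr fun g => ?_
  refine Subgroup.mem_centralizer_singleton_iff.mp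
    (PresentedGroup.generated_by (braidRels n) _ (fun i => ?_) g)
  refine Subgroup.mem_centralizer_singleton_iff.mpr ?_
  simpa [toBraidGroup_gen, toBraidGroup_delta, braidGen] using
    congrArg (toBraidGroup n) (commute_delta_sq (gen i)).eq.symm

theorem exists_eq_toBraidGroup_mul_zpow (g : BraidGroup n) :
    ∃ (x : PositiveBraid (n - 1)) (k : ℤ), g = toBraidGroup n x * (braidDelta n ^ 2) ^ k := by
  set z := braidDelta n ^ 2
  have hz (k : ℤ) (h : BraidGroup n) : h * z ^ k = z ^ k * h :=
    Subgroup.mem_center_iff.mp (Subgroup.zpow_mem _ braidDelta_sq_mem_center k) h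
  let M : Submonoid (BraidGroup n) :=
    { carrier := {g | ∃ (x : PositiveBraid (n - 1)) (k : ℤ), g = toBraidGroup n x * z ^ k}
      one_mem' := ⟨1, 0, by simp⟩
      mul_mem' := by
        rintro _ _ ⟨x, k, rfl⟩ ⟨y, l, rfl⟩
        refine ⟨x * y, k + l, ?_⟩
        rw [map_mul, zpow_add, mul_assoc, ← mul_assoc (z ^ k), ← hz]
        group }
  have hgen : Set.range (PresentedGroup.of (rels := braidRels n)) ∪
      (Set.range PresentedGroup.of)⁻¹ ⊆ (M : Set (BraidGroup n)) := by
    rintro y (⟨i, rfl⟩ | ⟨i, hi⟩)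
    · exact ⟨gen i, 0, by simp [toBraidGroup_gen, braidGen]⟩
    · obtain ⟨x, hx, -⟩ := exists_mul_eq_delta_sq i
      have hx : PresentedGroup.of i * toBraidGroup n x = z := by
        simpa [toBraidGroup_gen, toBraidGroup_delta, braidGen] using congrArg (toBraidGroup n) hx
      refine ⟨x, -1, ?_⟩
      rw [zpow_neg_one, ← inv_inv y, ← hi]
      exact inv_eq_of_mul_eq_one_right (by rw [← mul_assoc, hx, mul_inv_cancel])
  have hg : g ∈ (Subgroup.closure (Set.range (PresentedGroup.of (rels := braidRels n)))) := by
    rw [PresentedGroup.closure_range_of]; trivial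
  rw [← Subgroup.mem_toSubmonoid, Subgroup.closure_toSubmonoid] at hg
  exact Submonoid.closure_le.mpr hgen hg

theorem braidDelta_not_mem_center (hn : 3 ≤ n) :
    braidDelta n ∉ Subgroup.center (BraidGroup n) := by
  intro h
  let i : Fin (n - 1) := ⟨0, by omega⟩
  have hi := braidGen_mul_braidDelta i
  rw [Subgroup.mem_center_iff.mp h, ← toBraidGroup_gen, ← toBraidGroup_gen] at hi
  have := congrArg Fin.val (gen_injective (toBraidGroup_injective (mul_left_cancel hi)))
  simp only [Fin.val_rev, i] at this
  omega

theorem center_le_zpowers (hn : 3 ≤ n) :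
    Subgroup.center (BraidGroup n) ≤ Subgroup.zpowers (braidDelta n ^ 2) := by
  intro g hg
  obtain ⟨x, k, rfl⟩ := exists_eq_toBraidGroup_mul_zpow g
  have hx : toBraidGroup n x ∈ Subgroup.center (BraidGroup n) :=
    (Subgroup.mul_mem_cancel_right _ (Subgroup.zpow_mem _ braidDelta_sq_mem_center k)).mp hg
  have hcomm (i : Fin (n - 1)) : Commute (gen i) x := by
    apply toBraidGroup_injective
    rw [map_mul, map_mul, toBraidGroup_gen]
    exact Subgroup.mem_center_iff.mp hx _
  obtain ⟨s, rfl⟩ := eq_delta_pow_of_commute hcomm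
  rw [map_pow, toBraidGroup_delta] at hg ⊢
  rcases Nat.even_or_odd' s with ⟨t, rfl | rfl⟩
  · exact ⟨t + k, by simp only [zpow_add, pow_mul, zpow_natCast]⟩
  · refine absurd ?_ (braidDelta_not_mem_center hn)
    have hδ : braidDelta n = braidDelta n ^ (2 * t + 1) * (braidDelta n ^ 2) ^ k *
        (braidDelta n ^ 2) ^ (-(t : ℤ) - k) := by
      rw [pow_succ, pow_mul, ← zpow_natCast]
      group
    rw [hδ]
    exact Subgroup.mul_mem _ hg (Subgroup.zpow_mem _ braidDelta_sq_mem_center _)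

theorem eq_zero_of_braidDelta_sq_zpow_eq_one (hn : 2 ≤ n) {k : ℤ}
    (h : (braidDelta n ^ 2) ^ k = 1) : k = 0 := by
  rw [← pow_natAbs_eq_one, ← pow_mul, ← toBraidGroup_delta, ← map_pow,
    ← map_one (toBraidGroup n)] at h
  have := eq_zero_of_delta_pow_eq_one (by omega) (toBraidGroup_injective h)
  omega

end BraidGroup

theorem statement12 (n : ℕ) (hn : 3 ≤ n) :
    Subgroup.center (BraidGroup n) = Subgroup.zpowers (braidDelta n ^ 2) ∧
    ∀ m : ℤ, (braidDelta n ^ 2) ^ m = 1 → m = 0 :=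
  ⟨le_antisymm (BraidGroup.center_le_zpowers hn)
      (Subgroup.zpowers_le.mpr BraidGroup.braidDelta_sq_mem_center),
    fun _ => BraidGroup.eq_zero_of_braidDelta_sq_zpow_eq_one (by omega)⟩
end
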